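/- arXiv:2310.19329 — 3 statements merged into one kernel-verified Lean document; each statement's English description precedes it below -/
import Mathlib

section
/- Let X be a δ-hyperbolic geodesic metric space and g an isometry of X. Then the stable norm N(g) = lim_{n→∞} d(o, gⁿ(o))/n satisfies N(g) ≤ l(g) ≤ N(g) + 16δ, where l(g) = inf_{x∈X} d(x, g(x)) is the translation length. -/
/-!
Let `a = d(x, gx)` and `K = ⟨x, g²x⟩_{gx}`. If `a > 2K + 2δ`, hyperbolicity propagates along the
orbit: the products `⟨x, gⁿ⁺²x⟩_{gⁿ⁺¹x}` stay below `K + δ`, so `d(x, gⁿx)` grows at rate at least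
`a - 2K - 2δ`; hence `N(g) ≥ a - 2K - 2δ` in all cases. Now let `m` be a midpoint of a geodesic
from `gx` to `x`, so that `gm` is one from `g²x` to `gx`. Hyperbolicity along the chain
`m, x, g²x, gm` seen from `gx` gives `min(a/2, K) ≤ (a - d(m, gm))/2 + 2δ`, so either
`d(m, gm) ≤ 4δ` or `d(m, gm) ≤ a - 2K + 4δ ≤ N(g) + 6δ`. Hence `l(g) ≤ N(g) + 6δ`. The inequality
`N(g) ≤ l(g)` is the triangle inequality along an orbit.
-/

open Filter Topology

section

variable {X : Type*} [PseudoMetricSpace X]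

/-- The Gromov product `⟨x, y⟩_w`. -/
noncomputable def gromovProduct (w x y : X) : ℝ :=
  (dist x w + dist y w - dist x y) / 2

def GromovHyperbolic (X : Type*) [PseudoMetricSpace X] (δ : ℝ) : Prop :=
  ∀ w x y z : X, min (gromovProduct w x y) (gromovProduct w y z) - δ ≤ gromovProduct w x z

def GeodesicSpace (X : Type*) [PseudoMetricSpace X] : Prop :=
  ∀ x y : X, ∃ f : ℝ → X, f 0 = x ∧ f (dist x y) = y ∧
    ∀ s ∈ Set.Icc (0 : ℝ) (dist x y), ∀ t ∈ Set.Icc (0 : ℝ) (dist x y), dist (f s) (f t) = |s - t|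

theorem gromovProduct_comm (w x y : X) : gromovProduct w x y = gromovProduct w y x := by
  simp only [gromovProduct, dist_comm x y, add_comm (dist x w)]

theorem gromovProduct_nonneg (w x y : X) : 0 ≤ gromovProduct w x y := by
  have := dist_triangle_right x y w
  unfold gromovProduct
  linarith

theorem gromovProduct_add_gromovProduct (x y z : X) :
    gromovProduct z y x + gromovProduct y x z = dist y z := by
  simp only [gromovProduct, dist_comm x y, dist_comm x z, dist_comm z y]
  ring

theorem gromovProduct_eq_dist_of_dist_add_dist_eq {x y m : X}
    (h : dist x m + dist m y = dist x y) : gromovProduct x m y = dist x m := by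
  simp only [gromovProduct, dist_comm m x, dist_comm y x]
  linarith

theorem Isometry.gromovProduct_map {Y : Type*} [PseudoMetricSpace Y] {f : X → Y}
    (hf : Isometry f) (w x y : X) : gromovProduct (f w) (f x) (f y) = gromovProduct w x y := by
  simp only [gromovProduct, hf.dist_eq]

theorem GeodesicSpace.exists_midpoint (h : GeodesicSpace X) (x y : X) :
    ∃ m, dist x m = dist x y / 2 ∧ dist m y = dist x y / 2 := by
  obtain ⟨f, hf0, hf1, hf⟩ := h x y
  have hd := dist_nonneg (x := x) (y := y)
  have hmid : dist x y / 2 ∈ Set.Icc 0 (dist x y) := ⟨by linarith, by linarith⟩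
  have h0 := hf 0 ⟨le_rfl, hd⟩ _ hmid
  have h1 := hf _ hmid _ ⟨hd, le_rfl⟩
  rw [hf0, abs_of_nonpos (by linarith)] at h0
  rw [hf1, abs_of_nonpos (by linarith)] at h1
  exact ⟨f (dist x y / 2), by linarith, by linarith⟩

theorem Isometry.iterate {g : X → X} (hg : Isometry g) : ∀ n, Isometry g^[n]
  | 0 => isometry_id
  | n + 1 => (hg.iterate n).comp hg

namespace Isometry

variable {g : X → X} (hg : Isometry g)
include hg

theorem dist_iterate_le_mul (x : X) (n : ℕ) : dist x (g^[n] x) ≤ n * dist x (g x) := by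
  induction n with
  | zero => simp
  | succ n ih =>
    calc dist x (g^[n + 1] x) ≤ dist x (g x) + dist (g x) (g^[n + 1] x) := dist_triangle _ _ _
      _ = dist x (g x) + dist x (g^[n] x) := by
        rw [Function.iterate_succ_apply', hg.dist_eq]
      _ ≤ (n + 1 : ℕ) * dist x (g x) := by push_cast; linarith

theorem dist_iterate_le_dist_iterate_add (x y : X) (n : ℕ) :
    dist x (g^[n] x) ≤ dist y (g^[n] y) + 2 * dist x y :=
  calc dist x (g^[n] x) ≤ dist x y + dist y (g^[n] y) + dist (g^[n] y) (g^[n] x) :=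
        dist_triangle4 _ _ _ _
    _ = dist y (g^[n] y) + 2 * dist x y := by
        rw [(hg.iterate n).dist_eq, dist_comm y x]; ring

theorem tendsto_dist_iterate_div {o : X} {N : ℝ}
    (hN : Tendsto (fun n : ℕ => dist o (g^[n] o) / n) atTop (𝓝 N)) (x : X) :
    Tendsto (fun n : ℕ => dist x (g^[n] x) / n) atTop (𝓝 N) := by
  refine hN.congr_dist (squeeze_zero (fun n => dist_nonneg) (fun n => ?_)
    (tendsto_const_div_atTop_nhds_zero_nat (2 * dist o x)))
  rw [Real.dist_eq, ← sub_div, abs_div, Nat.abs_cast]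
  refine div_le_div_of_nonneg_right (abs_sub_le_iff.2 ⟨?_, ?_⟩) n.cast_nonneg
  · linarith [hg.dist_iterate_le_dist_iterate_add o x n]
  · linarith [hg.dist_iterate_le_dist_iterate_add x o n, dist_comm x o]

theorem le_dist_of_tendsto {x : X} {N : ℝ}
    (hN : Tendsto (fun n : ℕ => dist x (g^[n] x) / n) atTop (𝓝 N)) : N ≤ dist x (g x) :=
  le_of_tendsto' hN fun n => div_le_of_le_mul₀ n.cast_nonneg dist_nonneg <|
    mul_comm (dist x (g x)) n ▸ hg.dist_iterate_le_mul x n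

end Isometry

namespace GromovHyperbolic

variable {δ : ℝ} (hX : GromovHyperbolic X δ)
include hX

theorem nonneg (x : X) : 0 ≤ δ := by
  have := hX x x x x
  simp only [gromovProduct, dist_self, min_self] at this
  linarith

theorem le_or_le (w x y z : X) :
    gromovProduct w x y ≤ gromovProduct w x z + δ ∨
      gromovProduct w y z ≤ gromovProduct w x z + δ := by
  rcases min_le_iff.1 (sub_le_iff_le_add.1 (hX w x y z)) with h | h
  exacts [.inl h, .inr h]

theorem min_min_sub_two_mul_le (w x y z t : X) :
    min (min (gromovProduct w x y) (gromovProduct w y z)) (gromovProduct w z t) - 2 * δ ≤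
      gromovProduct w x t := by
  have hδ := hX.nonneg w
  rw [sub_le_iff_le_add, min_le_iff, min_le_iff]
  rcases hX.le_or_le w x z t with hxz | hzt
  · rcases hX.le_or_le w x y z with hxy | hyz
    · exact .inl (.inl (by linarith))
    · exact .inl (.inr (by linarith))
  · exact .inr (by linarith)

section Chain

variable {x : ℕ → X} {a K : ℝ} (hd : ∀ i, dist (x i) (x (i + 1)) = a)
  (hK : ∀ i, gromovProduct (x (i + 1)) (x i) (x (i + 2)) ≤ K)
include hd hK

theorem gromovProduct_chain_le (ha : 2 * K + 2 * δ < a) (n : ℕ) :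
    gromovProduct (x (n + 1)) (x 0) (x (n + 2)) ≤ K + δ := by
  induction n with
  | zero => linarith [hK 0, hX.nonneg (x 0)]
  | succ n ih =>
    show gromovProduct (x (n + 2)) (x 0) (x (n + 3)) ≤ K + δ
    have hK' : gromovProduct (x (n + 2)) (x (n + 1)) (x (n + 3)) ≤ K := hK (n + 1)
    -- `⟨x (n+1), x 0⟩` seen from `x (n+2)` is at least `a - K - δ > K + δ`
    have hback := gromovProduct_add_gromovProduct (x 0) (x (n + 1)) (x (n + 2))
    rw [hd (n + 1)] at hback
    rcases hX.le_or_le (x (n + 2)) (x (n + 1)) (x 0) (x (n + 3)) with h | h <;> linarith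

theorem mul_le_dist_of_chain (n : ℕ) : n * (a - 2 * K - 2 * δ) ≤ dist (x 0) (x n) := by
  rcases le_or_gt a (2 * K + 2 * δ) with ha | ha
  · exact (mul_nonpos_of_nonneg_of_nonpos n.cast_nonneg (by linarith)).trans dist_nonneg
  suffices h : ∀ n : ℕ, (n + 1) * (a - 2 * K - 2 * δ) ≤ dist (x 0) (x (n + 1)) by
    rcases n with _ | n
    · simp
    · exact_mod_cast h n
  intro n
  induction n with
  | zero =>
    rw [Nat.cast_zero, zero_add, one_mul, hd 0]
    linarith [hK 0, gromovProduct_nonneg (x 1) (x 0) (x 2), hX.nonneg (x 0)]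
  | succ n ih =>
    have hstep := hX.gromovProduct_chain_le hd hK ha n
    rw [gromovProduct, dist_comm (x (n + 2)), hd (n + 1)] at hstep
    push_cast
    linarith

end Chain

theorem mul_le_dist_iterate {g : X → X} (hg : Isometry g) (x : X) (n : ℕ) :
    n * (dist x (g x) - 2 * gromovProduct (g x) x (g (g x)) - 2 * δ) ≤ dist x (g^[n] x) :=
  hX.mul_le_dist_of_chain (x := fun i => g^[i] x)
    (fun i => (hg.iterate i).dist_eq x (g x))
    (fun i => ((hg.iterate i).gromovProduct_map (g x) x (g (g x))).le) n

theorem sub_le_of_tendsto {g : X → X} (hg : Isometry g) {x : X} {N : ℝ}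
    (hN : Tendsto (fun n : ℕ => dist x (g^[n] x) / n) atTop (𝓝 N)) :
    dist x (g x) - 2 * gromovProduct (g x) x (g (g x)) - 2 * δ ≤ N :=
  ge_of_tendsto hN <| (eventually_gt_atTop 0).mono fun n hn =>
    (le_div_iff₀' (Nat.cast_pos.2 hn)).2 (hX.mul_le_dist_iterate hg x n)

theorem min_le_of_midpoint {g : X → X} (hg : Isometry g) {x m : X}
    (hxm : dist (g x) m = dist (g x) x / 2) (hmx : dist m x = dist (g x) x / 2) :
    min (dist x (g x) / 2) (gromovProduct (g x) x (g (g x))) ≤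
      (dist x (g x) - dist m (g m)) / 2 + 2 * δ := by
  have hm : gromovProduct (g x) m x = dist x (g x) / 2 := by
    rw [gromovProduct_eq_dist_of_dist_add_dist_eq (by linarith), hxm, dist_comm]
  have hgm : gromovProduct (g x) (g (g x)) (g m) = dist x (g x) / 2 := by
    rw [gromovProduct_comm, gromovProduct_eq_dist_of_dist_add_dist_eq, hg.dist_eq, dist_comm, hmx,
      dist_comm]
    rw [hg.dist_eq, hg.dist_eq, hg.dist_eq]
    linarith [dist_comm x m, dist_comm m (g x), dist_comm x (g x)]
  have hmgm : gromovProduct (g x) m (g m) = (dist x (g x) - dist m (g m)) / 2 := by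
    rw [gromovProduct, hg.dist_eq, dist_comm m, hxm, hmx, dist_comm (g x)]
    ring
  have := hX.min_min_sub_two_mul_le (g x) m x (g (g x)) (g m)
  rw [hm, hgm, hmgm, min_right_comm, min_self] at this
  linarith

theorem exists_dist_le_add (hgeo : GeodesicSpace X) {g : X → X} (hg : Isometry g) {x : X} {N : ℝ}
    (hN : Tendsto (fun n : ℕ => dist x (g^[n] x) / n) atTop (𝓝 N)) :
    ∃ m, dist m (g m) ≤ N + 6 * δ := by
  obtain ⟨m, hxm, hmx⟩ := hgeo.exists_midpoint (g x) x
  have hmid := hX.min_le_of_midpoint hg hxm hmx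
  have hgrowth := hX.sub_le_of_tendsto hg hN
  have hN0 : 0 ≤ N := ge_of_tendsto' hN fun n => by positivity
  have hδ := hX.nonneg x
  exact ⟨m, by rcases min_le_iff.1 hmid with h | h <;> linarith⟩

end GromovHyperbolic

end

theorem stable_norm_le_translation_length_le_general {X : Type*} [MetricSpace X]
    (δ : ℝ)
    (hhyp : ∀ w x y z : X,
      min ((dist x w + dist y w - dist x y) / 2) ((dist y w + dist z w - dist y z) / 2) - δ ≤
        (dist x w + dist z w - dist x z) / 2)
    (hgeo : ∀ x y : X, ∃ f : ℝ → X, f 0 = x ∧ f (dist x y) = y ∧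
      ∀ s ∈ Set.Icc (0 : ℝ) (dist x y), ∀ t ∈ Set.Icc (0 : ℝ) (dist x y),
        dist (f s) (f t) = |s - t|)
    (g : X → X) (hg : Isometry g)
    (o : X) (N : ℝ)
    (hN : Tendsto (fun n : ℕ => dist o (g^[n] o) / n) atTop (𝓝 N)) :
    N ≤ (⨅ x : X, dist x (g x)) ∧ (⨅ x : X, dist x (g x)) ≤ N + 16 * δ := by
  have hX : GromovHyperbolic X δ := hhyp
  have hN' := hg.tendsto_dist_iterate_div hN
  have : Nonempty X := ⟨o⟩
  have hbdd : BddBelow (Set.range fun x => dist x (g x)) :=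
    ⟨0, Set.forall_mem_range.2 fun _ => dist_nonneg⟩
  obtain ⟨m, hm⟩ := hX.exists_dist_le_add hgeo hg (hN' o)
  refine ⟨le_ciInf fun x => hg.le_dist_of_tendsto (hN' x), ?_⟩
  linarith [ciInf_le hbdd m, hX.nonneg o]

/-- In a `δ`-hyperbolic geodesic metric space, the stable norm
`N(g) = lim dist o (gⁿ o) / n` of an isometry `g` and the translation length
`l(g) = ⨅ x, dist x (g x)` satisfy `N(g) ≤ l(g) ≤ N(g) + 16δ`. -/
theorem stable_norm_le_translation_length_le {X : Type*} [MetricSpace X]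
    (δ : ℝ) (hδ : 0 ≤ δ)
    (hhyp : ∀ w x y z : X,
      min ((dist x w + dist y w - dist x y) / 2) ((dist y w + dist z w - dist y z) / 2) - δ ≤
        (dist x w + dist z w - dist x z) / 2)
    (hgeo : ∀ x y : X, ∃ f : ℝ → X, f 0 = x ∧ f (dist x y) = y ∧
      ∀ s ∈ Set.Icc (0 : ℝ) (dist x y), ∀ t ∈ Set.Icc (0 : ℝ) (dist x y),
        dist (f s) (f t) = |s - t|)
    (g : X → X) (hg : Isometry g) (hgsurj : Function.Surjective g)
    (o : X) (N : ℝ)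
    (hN : Tendsto (fun n : ℕ => dist o (g^[n] o) / n) atTop (𝓝 N)) :
    N ≤ (⨅ x : X, dist x (g x)) ∧ (⨅ x : X, dist x (g x)) ≤ N + 16 * δ :=
  stable_norm_le_translation_length_le_general δ hhyp hgeo g hg o N hN
end

section
/- If g and h are two elliptic isometries of an ℝ-tree (T, d), then the translation length of the composition satisfies l(g∘h) = 2·d(Fix(g), Fix(h)), where Fix denotes the fixed-point set. In particular, if g, h, and gh are all elliptic, then Fix(g) ∩ Fix(h) ≠ ∅. -/
/-- A parametrization of a geodesic from `x` to `y` at unit speed. -/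
def IsGeodesicParam {T : Type*} [MetricSpace T] (f : ℝ → T) (x y : T) : Prop :=
  f 0 = x ∧ f (dist x y) = y ∧
    ∀ s ∈ Set.Icc (0 : ℝ) (dist x y), ∀ t ∈ Set.Icc (0 : ℝ) (dist x y),
      dist (f s) (f t) = |s - t|

/-- An arc from `x` to `y`: the image of a topological embedding (here: a continuous
injective map, equivalently an embedding since the interval is compact) of a closed
interval, sending the endpoints to `x` and `y`. -/
def IsArc {T : Type*} [MetricSpace T] (A : Set T) (x y : T) : Prop :=
  ∃ (L : ℝ) (f : ℝ → T), 0 ≤ L ∧ ContinuousOn f (Set.Icc 0 L) ∧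
    Set.InjOn f (Set.Icc 0 L) ∧ f 0 = x ∧ f L = y ∧ A = f '' Set.Icc 0 L

/-- A geodesic segment from `x` to `y`. -/
def IsGeodesicSegment {T : Type*} [MetricSpace T] (A : Set T) (x y : T) : Prop :=
  ∃ f : ℝ → T, IsGeodesicParam f x y ∧ A = f '' Set.Icc 0 (dist x y)

/-- An `ℝ`-tree: a nonempty metric space in which any two points are connected by
a unique arc, and this arc is a geodesic segment. -/
def IsRTree (T : Type*) [MetricSpace T] : Prop :=
  Nonempty T ∧ ∀ x y : T,
    (∃ A : Set T, IsArc A x y) ∧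
    (∀ A B : Set T, IsArc A x y → IsArc B x y → A = B) ∧
    (∀ A : Set T, IsArc A x y → IsGeodesicSegment A x y)

/-- The translation length of an isometry. -/
noncomputable def translationLength {T : Type*} [MetricSpace T] (g : T ≃ᵢ T) : ℝ :=
  ⨅ x : T, dist x (g x)

/-- The fixed-point set of an isometry. -/
def fixedSet {T : Type*} [MetricSpace T] (g : T ≃ᵢ T) : Set T := {x | g x = x}

section RTreeAux

variable {T : Type*} [MetricSpace T]

/-- The image of a geodesic parametrization is an arc. -/
private lemma isArc_of_param {f : ℝ → T} {x y : T} (hf : IsGeodesicParam f x y) :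
    IsArc (f '' Set.Icc 0 (dist x y)) x y := by
  obtain ⟨h0, hL, hd⟩ := hf
  refine ⟨dist x y, f, dist_nonneg, ?_, ?_, h0, hL, rfl⟩
  · refine (LipschitzOnWith.of_dist_le_mul (K := 1) ?_).continuousOn
    intro s hs t ht
    rw [hd s hs t ht, NNReal.coe_one, one_mul, Real.dist_eq]
  · intro s hs t ht hst
    have hd' := hd s hs t ht
    rw [hst, dist_self] at hd'
    have h0' := abs_eq_zero.mp hd'.symm
    linarith

/-- In an ℝ-tree, a geodesic parametrization exists between any two points. -/
private lemma exists_param (hT : IsRTree T) (x y : T) :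
    ∃ f : ℝ → T, IsGeodesicParam f x y := by
  obtain ⟨A, hA⟩ := (hT.2 x y).1
  obtain ⟨f, hf, -⟩ := (hT.2 x y).2.2 A hA
  exact ⟨f, hf⟩

/-- Gluing lemma: if `z` is metrically between `x` and `y`, then `z` lies on any
geodesic parametrization from `x` to `y`, at parameter `dist x z`. -/
private lemma param_eq_of_btw (hT : IsRTree T) {f : ℝ → T} {x y : T}
    (hf : IsGeodesicParam f x y) {z : T} (hz : dist x z + dist z y = dist x y) :
    f (dist x z) = z := by
  obtain ⟨f1, h10, h1L, h1d⟩ := exists_param hT x z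
  obtain ⟨f2, h20, h2L, h2d⟩ := exists_param hT z y
  have d1nn : (0:ℝ) ≤ dist x z := dist_nonneg
  have d2nn : (0:ℝ) ≤ dist z y := dist_nonneg
  set d1 := dist x z with hd1
  set d2 := dist z y with hd2
  set F : ℝ → T := fun t => if t < d1 then f1 t else f2 (t - d1) with hFdef
  -- distance of F t from x
  have key : ∀ t ∈ Set.Icc (0:ℝ) (dist x y), dist x (F t) = t := by
    intro t ht
    by_cases hc : t < d1
    · simp only [hFdef, if_pos hc]
      have h := h1d 0 ⟨le_refl _, d1nn⟩ t ⟨ht.1, hc.le⟩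
      rw [h10] at h
      rw [h, abs_sub_comm, abs_of_nonneg (by linarith [ht.1] : (0:ℝ) ≤ t - 0)]
      ring
    · push_neg at hc
      simp only [hFdef, if_neg (not_lt.mpr hc)]
      have harg : t - d1 ∈ Set.Icc (0:ℝ) d2 := ⟨by linarith, by
        have := ht.2; rw [← hz] at this; linarith⟩
      have hy2 : dist (f2 (t - d1)) y = d2 - (t - d1) := by
        have h := h2d (t - d1) harg d2 ⟨d2nn, le_refl _⟩
        rw [h2L] at h
        rw [h, abs_of_nonpos (by linarith [harg.2])]
        ring
      have hz2 : dist z (f2 (t - d1)) = t - d1 := by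
        have h := h2d 0 ⟨le_refl _, d2nn⟩ (t - d1) harg
        rw [h20] at h
        rw [h, abs_sub_comm, abs_of_nonneg (by linarith [harg.1] : (0:ℝ) ≤ t - d1 - 0)]
        ring
      have hub : dist x (f2 (t - d1)) ≤ t := by
        have := dist_triangle x z (f2 (t - d1))
        rw [hz2] at this
        linarith
      have hlb : t ≤ dist x (f2 (t - d1)) := by
        have := dist_triangle x (f2 (t - d1)) y
        rw [hy2, ← hz] at this
        linarith
      linarith
  -- F is a geodesic parametrization from x to y
  have hF0 : F 0 = x := by
    by_cases hc : (0:ℝ) < d1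
    · simp only [hFdef, if_pos hc]; exact h10
    · push_neg at hc
      have hd10 : d1 = 0 := le_antisymm hc d1nn
      have hzx : z = x := by
        rw [← dist_eq_zero, dist_comm]; exact hd10
      simp only [hFdef]
      rw [if_neg (not_lt.mpr hc), zero_sub, hd10, neg_zero, h20, hzx]
  have hFL : F (dist x y) = y := by
    have hnl : ¬ dist x y < d1 := by rw [← hz]; push_neg; linarith
    simp only [hFdef, if_neg hnl]
    rw [show dist x y - d1 = d2 by rw [← hz]; ring]
    exact h2L
  have keyle : ∀ s ∈ Set.Icc (0:ℝ) (dist x y), ∀ t ∈ Set.Icc (0:ℝ) (dist x y),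
      s ≤ t → dist (F s) (F t) ≤ t - s := by
    intro s hs t ht hst
    by_cases hct : t < d1
    · have hcs : s < d1 := lt_of_le_of_lt hst hct
      simp only [hFdef, if_pos hct, if_pos hcs]
      rw [h1d s ⟨hs.1, hcs.le⟩ t ⟨ht.1, hct.le⟩, abs_of_nonpos (by linarith)]
      linarith
    · push_neg at hct
      by_cases hcs : s < d1
      · simp only [hFdef, if_pos hcs, if_neg (not_lt.mpr hct)]
        have hsz : dist (f1 s) z = d1 - s := by
          have h := h1d s ⟨hs.1, hcs.le⟩ d1 ⟨d1nn, le_refl _⟩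
          rw [h1L] at h
          rw [h, abs_of_nonpos (by linarith)]; ring
        have harg : t - d1 ∈ Set.Icc (0:ℝ) d2 := ⟨by linarith, by
          have := ht.2; rw [← hz] at this; linarith⟩
        have hzt : dist z (f2 (t - d1)) = t - d1 := by
          have h := h2d 0 ⟨le_refl _, d2nn⟩ (t - d1) harg
          rw [h20] at h
          rw [h, abs_sub_comm, abs_of_nonneg (by linarith [harg.1] : (0:ℝ) ≤ t - d1 - 0)]
          ring
        have := dist_triangle (f1 s) z (f2 (t - d1))
        rw [hsz, hzt] at this
        linarith
      · push_neg at hcs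
        simp only [hFdef, if_neg (not_lt.mpr hct), if_neg (not_lt.mpr hcs)]
        have hargs : s - d1 ∈ Set.Icc (0:ℝ) d2 := ⟨by linarith, by
          have := hs.2; rw [← hz] at this; linarith⟩
        have hargt : t - d1 ∈ Set.Icc (0:ℝ) d2 := ⟨by linarith, by
          have := ht.2; rw [← hz] at this; linarith⟩
        rw [h2d _ hargs _ hargt, abs_of_nonpos (by linarith)]
        linarith
  have keyd : ∀ s ∈ Set.Icc (0:ℝ) (dist x y), ∀ t ∈ Set.Icc (0:ℝ) (dist x y),
      dist (F s) (F t) = |s - t| := by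
    intro s hs t ht
    have hlow : |s - t| ≤ dist (F s) (F t) := by
      have := abs_dist_sub_le (F s) (F t) x
      rw [dist_comm (F s) x, dist_comm (F t) x, key s hs, key t ht] at this
      exact this
    rcases le_total s t with hst | hst
    · have hle := keyle s hs t ht hst
      rw [abs_of_nonpos (by linarith : s - t ≤ 0)] at hlow ⊢
      linarith
    · have hle := keyle t ht s hs hst
      have hcomm : dist (F s) (F t) = dist (F t) (F s) := dist_comm _ _
      rw [abs_of_nonneg (by linarith : (0:ℝ) ≤ s - t)] at hlow ⊢
      linarith
  have hFparam : IsGeodesicParam F x y := ⟨hF0, hFL, keyd⟩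
  have himg := (hT.2 x y).2.1 _ _ (isArc_of_param hFparam) (isArc_of_param hf)
  have hzF : z ∈ F '' Set.Icc (0:ℝ) (dist x y) := by
    refine ⟨d1, ⟨d1nn, by linarith⟩, ?_⟩
    simp only [hFdef, if_neg (lt_irrefl d1)]
    rw [sub_self]; exact h20
  rw [himg] at hzF
  obtain ⟨t, ht, hft⟩ := hzF
  have htz : dist x (f t) = t := by
    have h := hf.2.2 0 ⟨le_refl _, dist_nonneg⟩ t ht
    rw [hf.1] at h
    rw [h, abs_sub_comm, abs_of_nonneg (by linarith [ht.1] : (0:ℝ) ≤ t - 0)]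
    ring
  rw [hft] at htz
  rw [← hd1] at htz
  rw [htz]
  exact hft

/-- Two points metrically between `x` and `y` are at distance the absolute difference
of their distances to `x`. -/
private lemma dist_btw_btw (hT : IsRTree T) {x y p c : T}
    (hp : dist x p + dist p y = dist x y) (hc : dist x c + dist c y = dist x y) :
    dist p c = |dist x p - dist x c| := by
  obtain ⟨f, hf⟩ := exists_param hT x y
  have e1 := param_eq_of_btw hT hf hp
  have e2 := param_eq_of_btw hT hf hc
  have hpmem : dist x p ∈ Set.Icc (0:ℝ) (dist x y) :=
    ⟨dist_nonneg, by linarith [dist_nonneg (x := p) (y := y)]⟩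
  have hcmem : dist x c ∈ Set.Icc (0:ℝ) (dist x y) :=
    ⟨dist_nonneg, by linarith [dist_nonneg (x := c) (y := y)]⟩
  calc dist p c = dist (f (dist x p)) (f (dist x c)) := by rw [e1, e2]
  _ = |dist x p - dist x c| := hf.2.2 _ hpmem _ hcmem

/-- Tripod lemma: any three points of an ℝ-tree admit a center. -/
private lemma exists_center (hT : IsRTree T) (y x z : T) :
    ∃ c : T, dist y c + dist c x = dist y x ∧ dist y c + dist c z = dist y z ∧
      dist x c + dist c z = dist x z := by
  obtain ⟨f, hf0, hfL, hfd⟩ := exists_param hT y x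
  obtain ⟨g, hg0, hgL, hgd⟩ := exists_param hT y z
  have hdx : (0:ℝ) ≤ dist y x := dist_nonneg
  have hdz : (0:ℝ) ≤ dist y z := dist_nonneg
  set M := min (dist y x) (dist y z) with hM
  have hM0 : (0:ℝ) ≤ M := le_min hdx hdz
  set E := {t : ℝ | t ∈ Set.Icc (0:ℝ) M ∧ f t = g t} with hE
  have hE0 : (0:ℝ) ∈ E := ⟨⟨le_refl _, hM0⟩, by rw [hf0, hg0]⟩
  have hEbdd : BddAbove E := ⟨M, fun t ht => ht.1.2⟩
  have hEne : E.Nonempty := ⟨0, hE0⟩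
  set t₀ := sSup E with ht₀def
  have ht₀0 : 0 ≤ t₀ := le_csSup hEbdd hE0
  have ht₀M : t₀ ≤ M := csSup_le hEne fun t ht => ht.1.2
  have ht₀x : t₀ ≤ dist y x := le_trans ht₀M (min_le_left _ _)
  have ht₀z : t₀ ≤ dist y z := le_trans ht₀M (min_le_right _ _)
  have hfg : f t₀ = g t₀ := by
    by_contra hne
    have hδ : 0 < dist (f t₀) (g t₀) := dist_pos.mpr hne
    obtain ⟨t, htE, htl⟩ := exists_lt_of_lt_csSup hEne
      (show t₀ - dist (f t₀) (g t₀) / 4 < t₀ by linarith)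
    have htt : t ≤ t₀ := le_csSup hEbdd htE
    have h1 : dist (f t₀) (f t) = |t₀ - t| :=
      hfd t₀ ⟨ht₀0, ht₀x⟩ t ⟨htE.1.1, le_trans htE.1.2 (min_le_left _ _)⟩
    have h2 : dist (g t) (g t₀) = |t - t₀| :=
      hgd t ⟨htE.1.1, le_trans htE.1.2 (min_le_right _ _)⟩ t₀ ⟨ht₀0, ht₀z⟩
    rw [← htE.2] at h2
    have htr := dist_triangle (f t₀) (f t) (g t₀)
    have ha1 : |t₀ - t| = t₀ - t := abs_of_nonneg (by linarith)
    have ha2 : |t - t₀| = t₀ - t := by rw [abs_sub_comm]; exact ha1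
    rw [h1, ha1] at htr
    rw [ha2] at h2
    rw [h2] at htr
    linarith
  have hyc : dist y (f t₀) = t₀ := by
    have h := hfd 0 ⟨le_refl _, hdx⟩ t₀ ⟨ht₀0, ht₀x⟩
    rw [hf0] at h
    rw [h, abs_sub_comm, abs_of_nonneg (by linarith : (0:ℝ) ≤ t₀ - 0)]
    ring
  have hcx : dist (f t₀) x = dist y x - t₀ := by
    have h := hfd t₀ ⟨ht₀0, ht₀x⟩ (dist y x) ⟨hdx, le_refl _⟩
    rw [hfL] at h
    rw [h, abs_of_nonpos (by linarith)]
    ring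
  have hcz : dist (f t₀) z = dist y z - t₀ := by
    have h := hgd t₀ ⟨ht₀0, ht₀z⟩ (dist y z) ⟨hdz, le_refl _⟩
    rw [hgL] at h
    rw [hfg, h, abs_of_nonpos (by linarith)]
    ring
  -- construct an arc from x to z through f t₀
  set Lx := dist y x - t₀ with hLxdef
  set Lz := dist y z - t₀ with hLzdef
  have hLx0 : (0:ℝ) ≤ Lx := by rw [hLxdef]; linarith
  have hLz0 : (0:ℝ) ≤ Lz := by rw [hLzdef]; linarith
  set P : ℝ → T := fun s => if s < Lx then f (dist y x - s) else g (t₀ + (s - Lx)) with hPdef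
  have hP0 : P 0 = x := by
    by_cases hc : (0:ℝ) < Lx
    · simp only [hPdef, if_pos hc, sub_zero]; exact hfL
    · push_neg at hc
      have hLxeq : Lx = 0 := le_antisymm hc hLx0
      have ht₀eq : t₀ = dist y x := by rw [hLxdef] at hLxeq; linarith
      simp only [hPdef]
      rw [if_neg (not_lt.mpr hc), zero_sub, hLxeq, neg_zero, add_zero, ← hfg, ht₀eq]
      exact hfL
  have hPL : P (Lx + Lz) = z := by
    have hnl : ¬ Lx + Lz < Lx := by push_neg; linarith
    simp only [hPdef, if_neg hnl]
    rw [show t₀ + (Lx + Lz - Lx) = dist y z by rw [hLzdef]; ring]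
    exact hgL
  have hPLx : P Lx = f t₀ := by
    simp only [hPdef, if_neg (lt_irrefl Lx)]
    rw [sub_self, add_zero, hfg]
  have hargf : ∀ s : ℝ, 0 ≤ s → s ≤ Lx → dist y x - s ∈ Set.Icc (0:ℝ) (dist y x) :=
    fun s h0 hL => ⟨by rw [hLxdef] at hL; linarith, by linarith⟩
  have hargg : ∀ s : ℝ, Lx ≤ s → s ≤ Lx + Lz → t₀ + (s - Lx) ∈ Set.Icc (0:ℝ) (dist y z) :=
    fun s h0 hL => ⟨by linarith, by rw [hLzdef] at hL; linarith⟩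
  have hPle : ∀ s ∈ Set.Icc (0:ℝ) (Lx + Lz), ∀ t ∈ Set.Icc (0:ℝ) (Lx + Lz),
      s ≤ t → dist (P s) (P t) ≤ t - s := by
    intro s hs t ht hst
    by_cases hct : t < Lx
    · have hcs : s < Lx := lt_of_le_of_lt hst hct
      simp only [hPdef, if_pos hct, if_pos hcs]
      rw [hfd _ (hargf s hs.1 hcs.le) _ (hargf t ht.1 hct.le)]
      rw [show dist y x - s - (dist y x - t) = t - s by ring, abs_of_nonneg (by linarith)]
    · push_neg at hct
      by_cases hcs : s < Lx
      · simp only [hPdef, if_pos hcs, if_neg (not_lt.mpr hct)]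
        have h1 : dist (f (dist y x - s)) (f t₀) = Lx - s := by
          rw [hfd _ (hargf s hs.1 hcs.le) _ ⟨ht₀0, ht₀x⟩]
          rw [show dist y x - s - t₀ = Lx - s by rw [hLxdef]; ring,
            abs_of_nonneg (by linarith)]
        have h2 : dist (g t₀) (g (t₀ + (t - Lx))) = t - Lx := by
          rw [hgd _ ⟨ht₀0, ht₀z⟩ _ (hargg t hct ht.2)]
          rw [show t₀ - (t₀ + (t - Lx)) = -(t - Lx) by ring, abs_neg,
            abs_of_nonneg (by linarith)]
        have h2' : dist (f t₀) (g (t₀ + (t - Lx))) = t - Lx := by rw [hfg]; exact h2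
        have htr := dist_triangle (f (dist y x - s)) (f t₀) (g (t₀ + (t - Lx)))
        rw [h1, h2'] at htr
        linarith
      · push_neg at hcs
        simp only [hPdef, if_neg (not_lt.mpr hct), if_neg (not_lt.mpr hcs)]
        rw [hgd _ (hargg s hcs hs.2) _ (hargg t hct ht.2)]
        rw [show t₀ + (s - Lx) - (t₀ + (t - Lx)) = -(t - s) by ring, abs_neg,
          abs_of_nonneg (by linarith)]
  have hPcont : ContinuousOn P (Set.Icc 0 (Lx + Lz)) := by
    refine (LipschitzOnWith.of_dist_le_mul (K := 1) ?_).continuousOn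
    intro s hs t ht
    rw [NNReal.coe_one, one_mul, Real.dist_eq]
    rcases le_total s t with hst | hst
    · have := hPle s hs t ht hst
      rw [abs_of_nonpos (by linarith)]
      linarith
    · have := hPle t ht s hs hst
      rw [dist_comm (P s) (P t)] at *
      rw [abs_of_nonneg (by linarith)]
      linarith
  have hPinjle : ∀ s ∈ Set.Icc (0:ℝ) (Lx + Lz), ∀ t ∈ Set.Icc (0:ℝ) (Lx + Lz),
      s ≤ t → P s = P t → s = t := by
    intro s hs t ht hst heq
    by_cases hct : t < Lx
    · have hcs : s < Lx := lt_of_le_of_lt hst hct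
      simp only [hPdef, if_pos hct, if_pos hcs] at heq
      have h := hfd _ (hargf s hs.1 hcs.le) _ (hargf t ht.1 hct.le)
      rw [heq, dist_self] at h
      have := abs_eq_zero.mp h.symm
      linarith
    · push_neg at hct
      by_cases hcs : s < Lx
      · exfalso
        simp only [hPdef, if_pos hcs, if_neg (not_lt.mpr hct)] at heq
        have hys : dist y (f (dist y x - s)) = dist y x - s := by
          have h := hfd 0 ⟨le_refl _, hdx⟩ _ (hargf s hs.1 hcs.le)
          rw [hf0] at h
          rw [h, abs_sub_comm, abs_of_nonneg (by
            have := (hargf s hs.1 hcs.le).1; linarith : (0:ℝ) ≤ dist y x - s - 0)]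
          ring
        have hyt : dist y (g (t₀ + (t - Lx))) = t₀ + (t - Lx) := by
          have h := hgd 0 ⟨le_refl _, hdz⟩ _ (hargg t hct ht.2)
          rw [hg0] at h
          rw [h, abs_sub_comm, abs_of_nonneg (by
            have := (hargg t hct ht.2).1; linarith : (0:ℝ) ≤ t₀ + (t - Lx) - 0)]
          ring
        have hreq : dist y x - s = t₀ + (t - Lx) := by
          rw [← hys, heq, hyt]
        have hrE : (dist y x - s) ∈ E := by
          refine ⟨⟨?_, le_min (by linarith [hs.1]) ?_⟩, ?_⟩
          · rw [hLxdef] at hcs; linarith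
          · rw [hreq]; have h2 := ht.2; rw [hLzdef] at h2; linarith
          · conv_rhs => rw [hreq]
            exact heq
        have hrle : dist y x - s ≤ t₀ := le_csSup hEbdd hrE
        rw [hLxdef] at hcs
        linarith
      · push_neg at hcs
        simp only [hPdef, if_neg (not_lt.mpr hct), if_neg (not_lt.mpr hcs)] at heq
        have h := hgd _ (hargg s hcs hs.2) _ (hargg t hct ht.2)
        rw [heq, dist_self] at h
        have := abs_eq_zero.mp h.symm
        linarith
  have hPinj : Set.InjOn P (Set.Icc 0 (Lx + Lz)) := by
    intro s hs t ht heq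
    rcases le_total s t with hst | hst
    · exact hPinjle s hs t ht hst heq
    · exact (hPinjle t ht s hs hst heq.symm).symm
  have harc : IsArc (P '' Set.Icc 0 (Lx + Lz)) x z :=
    ⟨Lx + Lz, P, by linarith, hPcont, hPinj, hP0, hPL, rfl⟩
  obtain ⟨f', hf', himg⟩ := (hT.2 x z).2.2 _ harc
  have hcmem : f t₀ ∈ P '' Set.Icc (0:ℝ) (Lx + Lz) :=
    ⟨Lx, ⟨hLx0, by linarith⟩, hPLx⟩
  rw [himg] at hcmem
  obtain ⟨t, htI, hft⟩ := hcmem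
  have hxc : dist x (f' t) = t := by
    have h := hf'.2.2 0 ⟨le_refl _, dist_nonneg⟩ t htI
    rw [hf'.1] at h
    rw [h, abs_sub_comm, abs_of_nonneg (by linarith [htI.1] : (0:ℝ) ≤ t - 0)]
    ring
  have hcz' : dist (f' t) z = dist x z - t := by
    have h := hf'.2.2 t htI (dist x z) ⟨dist_nonneg, le_refl _⟩
    rw [hf'.2.1] at h
    rw [h, abs_of_nonpos (by linarith [htI.2])]
    ring
  rw [hft] at hxc hcz'
  exact ⟨f t₀, by linarith, by linarith, by linarith⟩

/-- Projection onto the fixed set of an elliptic isometry. -/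
private lemma exists_proj (hT : IsRTree T) (h : T ≃ᵢ T) {p0 : T} (hp0 : h p0 = p0) (x : T) :
    ∃ p : T, h p = p ∧ dist x p + dist p (h x) = dist x (h x) ∧
      2 * dist x p = dist x (h x) := by
  obtain ⟨c, hc1, hc2, hc3⟩ := exists_center hT p0 x (h x)
  have hiso : dist p0 (h x) = dist p0 x := by
    conv_lhs => rw [← hp0]
    exact h.dist_eq p0 x
  have hcx : dist c x = dist c (h x) := by linarith
  have hchx : dist x c + dist c (h x) = dist x (h x) := hc3
  have hhalf : 2 * dist x c = dist x (h x) := by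
    have hcomm : dist x c = dist c x := dist_comm x c
    linarith
  refine ⟨c, ?_, by linarith [dist_comm x c, dist_comm c x], hhalf⟩
  have hdist1 : dist p0 (h c) = dist p0 c := by
    conv_lhs => rw [← hp0]
    exact h.dist_eq p0 c
  have hdist2 : dist (h c) (h x) = dist c x := h.dist_eq c x
  have h1 : dist p0 (h c) + dist (h c) (h x) = dist p0 (h x) := by
    rw [hdist1, hdist2]; linarith
  have h2 : dist p0 c + dist c (h x) = dist p0 (h x) := hc2
  have := dist_btw_btw hT h1 h2
  rw [hdist1, sub_self, abs_zero] at this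
  exact dist_eq_zero.mp this

/-- The key pointwise inequality: for each `x` there are fixed points `a` of `g`
and `b` of `h` with `2 d(a,b) ≤ d(x, g (h x))`. -/
private lemma pointwise_bound (hT : IsRTree T) (g h : T ≃ᵢ T)
    (hg : ∃ w, g w = w) (hh : ∃ w, h w = w) (x : T) :
    ∃ a, g a = a ∧ ∃ b, h b = b ∧ 2 * dist a b ≤ dist x (g (h x)) := by
  obtain ⟨q0, hq0⟩ := hg
  obtain ⟨p0, hp0⟩ := hh
  obtain ⟨p, hpfix, hpbtw, hphalf⟩ := exists_proj hT h hp0 x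
  obtain ⟨q, hqfix, hqbtw, hqhalf⟩ := exists_proj hT g hq0 (h x)
  obtain ⟨c, hc1, hc2, hc3⟩ := exists_center hT (h x) x (g (h x))
  refine ⟨q, hqfix, p, hpfix, ?_⟩
  -- abbreviations as real equalities
  have e1 : dist (h x) p + dist p x = dist (h x) x := by
    have c1 : dist (h x) p = dist p (h x) := dist_comm _ _
    have c2 : dist p x = dist x p := dist_comm _ _
    have c3 : dist (h x) x = dist x (h x) := dist_comm _ _
    linarith
  have hpc : dist p c = |dist (h x) p - dist (h x) c| := dist_btw_btw hT e1 hc1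
  have hqc : dist q c = |dist (h x) q - dist (h x) c| := dist_btw_btw hT hqbtw hc2
  set α := dist (h x) p with hαdef
  set β := dist (h x) q with hβdef
  set u := dist (h x) c with hudef
  have hxy : dist (h x) x = 2 * α := by
    have c1 : dist (h x) p = dist p (h x) := dist_comm _ _
    have c2 : dist p x = dist x p := dist_comm _ _
    have c3 : dist (h x) x = dist x (h x) := dist_comm _ _
    linarith
  have hygy : dist (h x) (g (h x)) = 2 * β := by linarith
  have hu2α : u ≤ 2 * α := by
    have := dist_nonneg (x := c) (y := x)
    linarith
  have hu2β : u ≤ 2 * β := by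
    have := dist_nonneg (x := c) (y := g (h x))
    linarith
  have hun : (0:ℝ) ≤ u := dist_nonneg
  have hαn : (0:ℝ) ≤ α := dist_nonneg
  have hβn : (0:ℝ) ≤ β := dist_nonneg
  have hxg : dist x (g (h x)) = 2*α + 2*β - 2*u := by
    have ccomm : dist x c = dist c x := dist_comm _ _
    linarith
  rw [hxg]
  have htri : dist q p ≤ dist q c + dist c p := dist_triangle q c p
  have hcp : dist c p = dist p c := dist_comm _ _
  by_cases h1 : u ≤ α
  · by_cases h2 : u ≤ β
    · have ep : dist p c = α - u := by rw [hpc, abs_of_nonneg (by linarith)]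
      have eq' : dist q c = β - u := by rw [hqc, abs_of_nonneg (by linarith)]
      linarith
    · push_neg at h2
      have ep : dist p c = α - u := by rw [hpc, abs_of_nonneg (by linarith)]
      have eq' : dist q c = u - β := by
        rw [hqc, abs_of_nonpos (by linarith)]; ring
      linarith
  · push_neg at h1
    by_cases h2 : u ≤ β
    · have ep : dist p c = u - α := by
        rw [hpc, abs_of_nonpos (by linarith)]; ring
      have eq' : dist q c = β - u := by rw [hqc, abs_of_nonneg (by linarith)]
      linarith
    · push_neg at h2
      -- both p and q lie between (h x) and c
      have ep : dist p c = u - α := by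
        rw [hpc, abs_of_nonpos (by linarith)]; ring
      have eq' : dist q c = u - β := by
        rw [hqc, abs_of_nonpos (by linarith)]; ring
      have hbp : dist (h x) p + dist p c = dist (h x) c := by linarith
      have hbq : dist (h x) q + dist q c = dist (h x) c := by linarith
      have := dist_btw_btw hT hbq hbp
      rcases abs_cases (dist (h x) q - dist (h x) p) with ⟨ha, _⟩ | ⟨ha, _⟩ <;>
        rw [ha] at this <;> linarith

end RTreeAux

/-- If `g` and `h` are elliptic isometries of an `ℝ`-tree, then
`l(g ∘ h) = 2 · d(Fix g, Fix h)`; in particular if `g`, `h` and `g ∘ h` are all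
elliptic, then `Fix g ∩ Fix h ≠ ∅`. -/
theorem rtree_elliptic_composition {T : Type*} [MetricSpace T] (hT : IsRTree T)
    (g h : T ≃ᵢ T) (hg : ∃ x, g x = x) (hh : ∃ x, h x = x) :
    translationLength (h.trans g) =
        2 * sInf {r : ℝ | ∃ a ∈ fixedSet g, ∃ b ∈ fixedSet h, r = dist a b} ∧
      ((∃ x, g (h x) = x) → (fixedSet g ∩ fixedSet h).Nonempty) := by
  obtain ⟨x0, hx0⟩ := hg
  obtain ⟨y0, hy0⟩ := hh
  haveI : Nonempty T := ⟨x0⟩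
  set S := {r : ℝ | ∃ a ∈ fixedSet g, ∃ b ∈ fixedSet h, r = dist a b} with hSdef
  have hSne : S.Nonempty := ⟨dist x0 y0, x0, hx0, y0, hy0, rfl⟩
  have hSbdd : BddBelow S := ⟨0, by rintro r ⟨a, -, b, -, rfl⟩; exact dist_nonneg⟩
  have happ : ∀ x : T, (h.trans g) x = g (h x) := fun x => rfl
  have hbdd : BddBelow (Set.range fun x : T => dist x ((h.trans g) x)) :=
    ⟨0, by rintro r ⟨x, rfl⟩; exact dist_nonneg⟩
  have key : ∀ x : T, ∃ a, g a = a ∧ ∃ b, h b = b ∧ 2 * dist a b ≤ dist x (g (h x)) :=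
    fun x => pointwise_bound hT g h ⟨x0, hx0⟩ ⟨y0, hy0⟩ x
  have htl : translationLength (h.trans g) = ⨅ x : T, dist x ((h.trans g) x) := rfl
  constructor
  · apply le_antisymm
    · -- upper bound
      have h2 : ∀ r ∈ S, translationLength (h.trans g) ≤ 2 * r := by
        rintro r ⟨a, ha, b, hb, rfl⟩
        have ha' : g a = a := ha
        have hb' : h b = b := hb
        have hgab : dist a (g b) = dist a b := by
          have := g.dist_eq a b
          rw [ha'] at this
          exact this
        have h3 : dist b ((h.trans g) b) ≤ 2 * dist a b := by
          rw [happ, hb']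
          have := dist_triangle b a (g b)
          rw [hgab] at this
          have hcomm : dist b a = dist a b := dist_comm _ _
          linarith
        rw [htl]
        exact le_trans (ciInf_le hbdd b) h3
      have hlow : translationLength (h.trans g) / 2 ≤ sInf S :=
        le_csInf hSne fun r hr => by linarith [h2 r hr]
      linarith
    · -- lower bound
      rw [htl]
      apply le_ciInf
      intro x
      obtain ⟨a, ha, b, hb, hab⟩ := key x
      have hle : sInf S ≤ dist a b := csInf_le hSbdd ⟨a, ha, b, hb, rfl⟩
      rw [happ]
      linarith
  · rintro ⟨x, hx⟩
    obtain ⟨a, ha, b, hb, hab⟩ := key x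
    rw [hx, dist_self] at hab
    have hab0 : dist a b = 0 :=
      le_antisymm (by linarith [dist_nonneg (x := a) (y := b)]) dist_nonneg
    have hba : a = b := dist_eq_zero.mp hab0
    exact ⟨a, ha, hba ▸ hb⟩
end

section
/- Let Γ be a group generated by a finite set S, acting by isometries on an ℝ-tree T. If every element of B_S = S ∪ {ss' : s, s' ∈ S, s ≠ s'} has translation length 0 (i.e., is elliptic), then the action has a global fixed point. -/
namespace RTreeAux
open Set

variable {T : Type*} [MetricSpace T]

theorem _root_.IsGeodesicParam.injOn {f : ℝ → T} {x y : T} (hf : IsGeodesicParam f x y) :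
    Set.InjOn f (Icc 0 (dist x y)) := by
  intro s hs t ht hst
  have h := hf.2.2 s hs t ht
  rw [hst, dist_self] at h
  have := abs_eq_zero.mp h.symm
  linarith

theorem _root_.IsGeodesicParam.continuousOn {f : ℝ → T} {x y : T} (hf : IsGeodesicParam f x y) :
    ContinuousOn f (Icc 0 (dist x y)) := by
  refine ((lipschitzOnWith_iff_dist_le_mul (K := 1)).mpr ?_).continuousOn
  intro s hs t ht
  rw [hf.2.2 s hs t ht, Real.dist_eq, NNReal.coe_one, one_mul]

theorem _root_.IsGeodesicParam.isArc {f : ℝ → T} {x y : T} (hf : IsGeodesicParam f x y) :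
    IsArc (f '' Icc 0 (dist x y)) x y :=
  ⟨dist x y, f, dist_nonneg, hf.continuousOn, hf.injOn, hf.1, hf.2.1, rfl⟩

theorem _root_.IsGeodesicParam.dist_left {f : ℝ → T} {x y : T} (hf : IsGeodesicParam f x y)
    {t : ℝ} (ht : t ∈ Icc 0 (dist x y)) : dist x (f t) = t := by
  have h := hf.2.2 0 ⟨le_refl 0, dist_nonneg⟩ t ht
  rw [hf.1] at h
  rw [h, zero_sub, abs_neg, abs_of_nonneg ht.1]

theorem exists_param (hT : IsRTree T) (x y : T) : ∃ f, IsGeodesicParam f x y := by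
  obtain ⟨A, hA⟩ := (hT.2 x y).1
  obtain ⟨f, hf, _⟩ := (hT.2 x y).2.2 A hA
  exact ⟨f, hf⟩

noncomputable def prm (hT : IsRTree T) (x y : T) : ℝ → T := (exists_param hT x y).choose

theorem prm_isom (hT : IsRTree T) (x y : T) : IsGeodesicParam (prm hT x y) x y :=
  (exists_param hT x y).choose_spec

theorem prm_zero (hT : IsRTree T) (x y : T) : prm hT x y 0 = x := (prm_isom hT x y).1

theorem prm_last (hT : IsRTree T) (x y : T) : prm hT x y (dist x y) = y := (prm_isom hT x y).2.1

theorem prm_dist (hT : IsRTree T) (x y : T) {s t : ℝ} (hs : s ∈ Icc 0 (dist x y))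
    (ht : t ∈ Icc 0 (dist x y)) : dist (prm hT x y s) (prm hT x y t) = |s - t| :=
  (prm_isom hT x y).2.2 s hs t ht

theorem prm_dist_left (hT : IsRTree T) (x y : T) {t : ℝ} (ht : t ∈ Icc 0 (dist x y)) :
    dist x (prm hT x y t) = t := (prm_isom hT x y).dist_left ht

theorem param_unique (hT : IsRTree T) {f g : ℝ → T} {x y : T}
    (hf : IsGeodesicParam f x y) (hg : IsGeodesicParam g x y) :
    ∀ t ∈ Icc 0 (dist x y), f t = g t := by
  intro t ht
  have himg : f '' Icc 0 (dist x y) = g '' Icc 0 (dist x y) :=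
    (hT.2 x y).2.1 _ _ hf.isArc hg.isArc
  have hmem : f t ∈ g '' Icc 0 (dist x y) := himg ▸ mem_image_of_mem f ht
  obtain ⟨s, hs, hst⟩ := hmem
  have h1 : dist x (f t) = t := hf.dist_left ht
  have h2 : dist x (g s) = s := hg.dist_left hs
  rw [hst] at h2
  rw [← hst, h2.symm.trans h1]

theorem _root_.IsGeodesicParam.restrict {f : ℝ → T} {x y : T} (hf : IsGeodesicParam f x y)
    {t : ℝ} (ht : t ∈ Icc 0 (dist x y)) : IsGeodesicParam f x (f t) := by
  have hd : dist x (f t) = t := hf.dist_left ht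
  refine ⟨hf.1, by rw [hd], ?_⟩
  intro s hs u hu
  rw [hd] at hs hu
  exact hf.2.2 s ⟨hs.1, hs.2.trans ht.2⟩ u ⟨hu.1, hu.2.trans ht.2⟩

theorem prm_sub (hT : IsRTree T) (x y : T) {t : ℝ} (ht : t ∈ Icc 0 (dist x y))
    {s : ℝ} (hs : s ∈ Icc 0 t) :
    prm hT x (prm hT x y t) s = prm hT x y s := by
  have hd : dist x (prm hT x y t) = t := prm_dist_left hT x y ht
  exact param_unique hT (prm_isom hT x (prm hT x y t)) ((prm_isom hT x y).restrict ht) s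
    (by rw [hd]; exact hs)

theorem _root_.IsGeodesicParam.shift {f : ℝ → T} {x y : T} (hf : IsGeodesicParam f x y)
    {s t : ℝ} (hs : 0 ≤ s) (hst : s ≤ t) (ht : t ≤ dist x y) :
    IsGeodesicParam (fun r => f (s + r)) (f s) (f t) := by
  have hsm : s ∈ Icc 0 (dist x y) := ⟨hs, hst.trans ht⟩
  have htm : t ∈ Icc 0 (dist x y) := ⟨hs.trans hst, ht⟩
  have hd : dist (f s) (f t) = t - s := by
    rw [hf.2.2 s hsm t htm, abs_of_nonpos (by linarith), neg_sub]
  refine ⟨by show f (s + 0) = f s; rw [add_zero], by show f (s + _) = f t; rw [hd]; congr 1; ring, ?_⟩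
  intro r hr u hu
  rw [hd] at hr hu
  have h1 : s + r ∈ Icc 0 (dist x y) := ⟨by linarith [hr.1], by linarith [hr.2]⟩
  have h2 : s + u ∈ Icc 0 (dist x y) := ⟨by linarith [hu.1], by linarith [hu.2]⟩
  show dist (f (s + r)) (f (s + u)) = _
  rw [hf.2.2 _ h1 _ h2]
  congr 1; ring

theorem prm_mid (hT : IsRTree T) (x y : T) {s t : ℝ} (hs : 0 ≤ s) (hst : s ≤ t)
    (ht : t ≤ dist x y) {r : ℝ} (hr : r ∈ Icc 0 (t - s)) :
    prm hT (prm hT x y s) (prm hT x y t) r = prm hT x y (s + r) := by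
  have hshift := (prm_isom hT x y).shift hs hst ht
  have hd : dist (prm hT x y s) (prm hT x y t) = t - s := by
    rw [prm_dist hT x y ⟨hs, hst.trans ht⟩ ⟨hs.trans hst, ht⟩,
      abs_of_nonpos (by linarith), neg_sub]
  exact param_unique hT (prm_isom hT _ _) hshift r (by rw [hd]; exact hr)

theorem _root_.IsGeodesicParam.rev {f : ℝ → T} {x y : T} (hf : IsGeodesicParam f x y) :
    IsGeodesicParam (fun t => f (dist x y - t)) y x := by
  have hd : dist y x = dist x y := dist_comm y x
  refine ⟨by show f (dist x y - 0) = y; rw [sub_zero, hf.2.1],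
    by show f (dist x y - dist y x) = x; rw [hd, sub_self, hf.1], ?_⟩
  intro s hs t ht
  rw [hd] at hs ht
  have h1 : dist x y - s ∈ Icc 0 (dist x y) := ⟨by linarith [hs.2], by linarith [hs.1]⟩
  have h2 : dist x y - t ∈ Icc 0 (dist x y) := ⟨by linarith [ht.2], by linarith [ht.1]⟩
  show dist (f (dist x y - s)) (f (dist x y - t)) = _
  rw [hf.2.2 _ h1 _ h2, show dist x y - s - (dist x y - t) = -(s - t) by ring, abs_neg]

theorem prm_rev (hT : IsRTree T) (x y : T) {t : ℝ} (ht : t ∈ Icc 0 (dist x y)) :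
    prm hT y x t = prm hT x y (dist x y - t) :=
  param_unique hT (prm_isom hT y x) ((prm_isom hT x y).rev) t (by rwa [dist_comm y x])

theorem _root_.IsGeodesicParam.map {f : ℝ → T} {x y : T} (hf : IsGeodesicParam f x y)
    (g : T ≃ᵢ T) : IsGeodesicParam (fun t => g (f t)) (g x) (g y) := by
  have hd : dist (g x) (g y) = dist x y := g.dist_eq x y
  refine ⟨by show g (f 0) = g x; rw [hf.1], by show g (f (dist (g x) (g y))) = g y; rw [hd, hf.2.1], ?_⟩
  intro s hs t ht
  rw [hd] at hs ht
  show dist (g (f s)) (g (f t)) = _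
  rw [g.dist_eq, hf.2.2 s hs t ht]

theorem prm_map (hT : IsRTree T) (g : T ≃ᵢ T) (x y : T) {t : ℝ}
    (ht : t ∈ Icc 0 (dist x y)) : prm hT (g x) (g y) t = g (prm hT x y t) :=
  param_unique hT (prm_isom hT (g x) (g y)) ((prm_isom hT x y).map g) t
    (by rwa [g.dist_eq])

theorem Ylemma (hT : IsRTree T) (x y z : T) :
    ∃ t₀, 0 ≤ t₀ ∧ t₀ ≤ dist x y ∧ t₀ ≤ dist x z ∧
      (∀ t, 0 ≤ t → t ≤ t₀ → prm hT x y t = prm hT x z t) ∧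
      (∀ s, t₀ ≤ s → s ≤ dist x y → ∀ u, t₀ ≤ u → u ≤ dist x z →
        dist (prm hT x y s) (prm hT x z u) = (s - t₀) + (u - t₀)) ∧
      dist y z = (dist x y - t₀) + (dist x z - t₀) := by
  set a := dist x y with ha
  set b := dist x z with hb
  set f := prm hT x y with hfdef
  set g := prm hT x z with hgdef
  set K : Set ℝ := {t | t ∈ Icc 0 (min a b) ∧ f t = g t} with hKdef
  have hK0 : (0:ℝ) ∈ K := ⟨⟨le_refl 0, le_min dist_nonneg dist_nonneg⟩,
    by rw [hfdef, hgdef, prm_zero, prm_zero]⟩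
  have hKne : K.Nonempty := ⟨0, hK0⟩
  have hKbdd : BddAbove K := ⟨min a b, fun t ht => ht.1.2⟩
  set t₀ := sSup K with ht₀def
  have h0t : 0 ≤ t₀ := le_csSup hKbdd hK0
  have htm : t₀ ≤ min a b := csSup_le hKne (fun t ht => ht.1.2)
  have hta : t₀ ≤ a := htm.trans (min_le_left a b)
  have htb : t₀ ≤ b := htm.trans (min_le_right a b)
  have htmem_a : t₀ ∈ Icc 0 a := ⟨h0t, hta⟩
  have htmem_b : t₀ ∈ Icc 0 b := ⟨h0t, htb⟩
  -- t₀ realizes agreement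
  have hft₀ : f t₀ = g t₀ := by
    by_contra hne
    have hpos : 0 < dist (f t₀) (g t₀) := dist_pos.mpr hne
    obtain ⟨t, htK, htlt⟩ := exists_lt_of_lt_csSup hKne
      (show t₀ - dist (f t₀) (g t₀) / 4 < t₀ by linarith)
    have htle : t ≤ t₀ := le_csSup hKbdd htK
    have hta' : t ∈ Icc 0 a := ⟨htK.1.1, htK.1.2.trans (min_le_left a b)⟩
    have htb' : t ∈ Icc 0 b := ⟨htK.1.1, htK.1.2.trans (min_le_right a b)⟩
    have e1 : dist (f t₀) (f t) = |t₀ - t| := prm_dist hT x y htmem_a hta'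
    have e2 : dist (g t) (g t₀) = |t - t₀| := prm_dist hT x z htb' htmem_b
    have habs : |t₀ - t| = t₀ - t := abs_of_nonneg (by linarith)
    have habs2 : |t - t₀| = t₀ - t := by rw [abs_sub_comm, habs]
    have := dist_triangle4 (f t₀) (f t) (g t) (g t₀)
    rw [e1, htK.2, dist_self, e2, habs, habs2] at this
    linarith
  -- agreement below t₀
  have hagree : ∀ t, 0 ≤ t → t ≤ t₀ → f t = g t := by
    intro t h0 hle
    have hdl : dist x (f t₀) = t₀ := prm_dist_left hT x y htmem_a
    have hf' : IsGeodesicParam f x (f t₀) := (prm_isom hT x y).restrict htmem_a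
    have hg' : IsGeodesicParam g x (f t₀) := by
      rw [hft₀]; exact (prm_isom hT x z).restrict htmem_b
    exact param_unique hT hf' hg' t (by rw [hdl]; exact ⟨h0, hle⟩)
  -- quantitative part
  have hquant : ∀ s, t₀ ≤ s → s ≤ a → ∀ u, t₀ ≤ u → u ≤ b →
      dist (f s) (g u) = (s - t₀) + (u - t₀) := by
    intro s hts hsa u htu hub
    have hsmem : s ∈ Icc 0 a := ⟨h0t.trans hts, hsa⟩
    have humem : u ∈ Icc 0 b := ⟨h0t.trans htu, hub⟩
    rcases eq_or_lt_of_le hts with hst | hst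
    · rw [← hst, hft₀, prm_dist hT x z htmem_b humem,
        abs_of_nonpos (by linarith)]; ring
    rcases eq_or_lt_of_le htu with hut | hut
    · rw [← hut, ← hft₀, prm_dist hT x y hsmem htmem_a,
        abs_of_nonneg (by linarith)]; ring
    -- main case : t₀ < s, t₀ < u
    set L := (s - t₀) + (u - t₀) with hLdef
    have hL0 : 0 ≤ L := by simp only [hLdef]; linarith
    set h : ℝ → T := fun r => if r ≤ s - t₀ then f (min (max (s - r) 0) a)
      else g (min (max (r - s + 2*t₀) 0) b) with hhdef
    have hbranch1 : ∀ r, 0 ≤ r → r ≤ s - t₀ → h r = f (s - r) := by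
      intro r h0r hr
      simp only [hhdef, if_pos hr, max_eq_left (show (0:ℝ) ≤ s - r by linarith),
        min_eq_left (show s - r ≤ a by linarith)]
    have hbranch2 : ∀ r, s - t₀ < r → r ≤ L → h r = g (r - s + 2*t₀) := by
      intro r hr hrL
      rw [hLdef] at hrL
      simp only [hhdef, if_neg (not_le.mpr hr),
        max_eq_left (show (0:ℝ) ≤ r - s + 2*t₀ by linarith),
        min_eq_left (show r - s + 2*t₀ ≤ b by linarith)]
    have hcont1 : Continuous (fun r => f (min (max (s - r) 0) a)) := by
      refine (prm_isom hT x y).continuousOn.comp_continuous ?_ ?_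
      · exact ((continuous_const.sub continuous_id).max continuous_const).min continuous_const
      · exact fun r => ⟨le_min (le_max_right _ _) dist_nonneg, min_le_right _ _⟩
    have hcont2 : Continuous (fun r => g (min (max (r - s + 2*t₀) 0) b)) := by
      refine (prm_isom hT x z).continuousOn.comp_continuous ?_ ?_
      · exact (((continuous_id.sub continuous_const).add continuous_const).max
          continuous_const).min continuous_const
      · exact fun r => ⟨le_min (le_max_right _ _) dist_nonneg, min_le_right _ _⟩
    have hc : ContinuousOn h (Icc 0 L) := by
      refine (continuous_if_le continuous_id continuous_const hcont1.continuousOn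
        hcont2.continuousOn ?_).continuousOn
      intro r hr
      simp only [id_eq] at hr
      rw [show s - r = t₀ by linarith, show r - s + 2*t₀ = t₀ by linarith,
        max_eq_left h0t, min_eq_left hta, min_eq_left htb, hft₀]
    have hkey : ∀ r r', r ∈ Icc 0 L → r' ∈ Icc 0 L → r ≤ s - t₀ → ¬ r' ≤ s - t₀ →
        h r = h r' → False := by
      intro r r' hr hr' hrb hrb' heq
      rw [hbranch1 r hr.1 hrb, hbranch2 r' (not_le.mp hrb') hr'.2] at heq
      set σ := s - r with hσ
      set υ := r' - s + 2*t₀ with hυ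
      have hσm : σ ∈ Icc 0 a := ⟨by rw [hσ]; linarith [hr.2, hr.1], by rw [hσ]; linarith [hr.1]⟩
      have hυm : υ ∈ Icc 0 b := by
        constructor
        · rw [hυ]; linarith [not_le.mp hrb']
        · rw [hυ]; have := hr'.2; rw [hLdef] at this; linarith
      have d1 : dist x (f σ) = σ := prm_dist_left hT x y hσm
      have d2 : dist x (g υ) = υ := prm_dist_left hT x z hυm
      have hσυ : σ = υ := by rw [← d1, ← d2, heq]
      have hσK : σ ∈ K := by
        refine ⟨⟨hσm.1, le_min hσm.2 (hσυ ▸ hυm.2)⟩, ?_⟩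
        rw [heq, hσυ]
      have : σ ≤ t₀ := le_csSup hKbdd hσK
      have : t₀ < υ := by rw [hυ]; linarith [not_le.mp hrb']
      linarith [hσυ ▸ this]
    have hinj : InjOn h (Icc 0 L) := by
      intro r hr r' hr' heq
      by_cases hb1 : r ≤ s - t₀ <;> by_cases hb2 : r' ≤ s - t₀
      · rw [hbranch1 r hr.1 hb1, hbranch1 r' hr'.1 hb2] at heq
        have e1 : s - r ∈ Icc 0 a := ⟨by linarith [hr.2, hr.1], by linarith [hr.1]⟩
        have e2 : s - r' ∈ Icc 0 a := ⟨by linarith [hr'.2, hr'.1], by linarith [hr'.1]⟩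
        have := (prm_isom hT x y).injOn e1 e2 heq
        linarith
      · exact absurd heq (by intro hh; exact hkey r r' hr hr' hb1 hb2 hh)
      · exact absurd heq (by intro hh; exact hkey r' r hr' hr hb2 hb1 hh.symm)
      · rw [hbranch2 r (not_le.mp hb1) hr.2, hbranch2 r' (not_le.mp hb2) hr'.2] at heq
        have e1 : r - s + 2*t₀ ∈ Icc 0 b :=
          ⟨by linarith [not_le.mp hb1], by have := hr.2; rw [hLdef] at this; linarith⟩
        have e2 : r' - s + 2*t₀ ∈ Icc 0 b :=
          ⟨by linarith [not_le.mp hb2], by have := hr'.2; rw [hLdef] at this; linarith⟩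
        have := (prm_isom hT x z).injOn e1 e2 heq
        linarith
    have h0' : h 0 = f s := by
      rw [hbranch1 0 (le_refl 0) (by linarith), sub_zero]
    have hL' : h L = g u := by
      rw [hbranch2 L (by rw [hLdef]; linarith) (le_refl L)]
      congr 1; rw [hLdef]; ring
    have harc : IsArc (h '' Icc 0 L) (f s) (g u) := ⟨L, h, hL0, hc, hinj, h0', hL', rfl⟩
    obtain ⟨φ, hφ, himg⟩ := (hT.2 (f s) (g u)).2.2 _ harc
    set D := dist (f s) (g u) with hD
    have hwimg : f t₀ ∈ h '' Icc 0 L := by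
      refine ⟨s - t₀, ⟨by linarith, by rw [hLdef]; linarith⟩, ?_⟩
      rw [hbranch1 (s - t₀) (by linarith) (le_refl _)]
      congr 1; ring
    rw [himg] at hwimg
    obtain ⟨r, hrm, hr⟩ := hwimg
    have e1 : dist (f s) (f t₀) = s - t₀ := by
      rw [prm_dist hT x y hsmem htmem_a, abs_of_nonneg (by linarith)]
    have e2 : dist (f s) (φ r) = r := hφ.dist_left hrm
    have hrval : r = s - t₀ := by rw [← e2, hr, e1]
    have e3 : dist (φ r) (g u) = D - r := by
      have := hφ.2.2 r hrm D ⟨dist_nonneg, le_refl _⟩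
      rw [hφ.2.1] at this
      rw [this, abs_of_nonpos (by linarith [hrm.2]), neg_sub]
    have e4 : dist (f t₀) (g u) = u - t₀ := by
      rw [hft₀, prm_dist hT x z htmem_b humem, abs_of_nonpos (by linarith), neg_sub]
    rw [hr, e4] at e3
    rw [hD] at e3 ⊢
    rw [hLdef] at *
    linarith [hrval ▸ e3]
  refine ⟨t₀, h0t, hta, htb, hagree, hquant, ?_⟩
  have := hquant a hta (le_refl a) b htb (le_refl b)
  rw [hfdef, hgdef, prm_last, prm_last] at this
  rw [this]

/-- `b` lies between `a` and `c`. -/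
def Btw (a b c : T) : Prop := dist a c = dist a b + dist b c

theorem Btw.symm {a b c : T} (h : Btw a b c) : Btw c b a := by
  unfold Btw at *
  rw [dist_comm c a, dist_comm c b, dist_comm b a, h]; ring

theorem Btw.le {a b c : T} (h : Btw a b c) : dist a b ≤ dist a c := by
  unfold Btw at h; linarith [dist_nonneg (x := b) (y := c)]

theorem concat_param (hT : IsRTree T) {a b c : T} (h : Btw a b c) :
    IsGeodesicParam (fun r => if r ≤ dist a b then prm hT a b r
      else prm hT b c (r - dist a b)) a c := by
  set dab := dist a b with h1
  set dbc := dist b c with h2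
  set dac := dist a c with h3
  have hsum : dac = dab + dbc := h
  have h0ab : 0 ≤ dab := dist_nonneg
  have h0bc : 0 ≤ dbc := dist_nonneg
  have key : ∀ σ τ, σ ∈ Icc 0 dac → τ ∈ Icc 0 dac → σ ≤ τ →
      dist (if σ ≤ dab then prm hT a b σ else prm hT b c (σ - dab))
        (if τ ≤ dab then prm hT a b τ else prm hT b c (τ - dab)) = τ - σ := by
    intro σ τ hσ hτ hστ
    by_cases hb1 : σ ≤ dab <;> by_cases hb2 : τ ≤ dab
    · rw [if_pos hb1, if_pos hb2, prm_dist hT a b ⟨hσ.1, hb1⟩ ⟨hτ.1, hb2⟩,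
        abs_of_nonpos (by linarith), neg_sub]
    · rw [if_pos hb1, if_neg hb2]
      have hτm : τ - dab ∈ Icc 0 dbc := ⟨by linarith [not_le.mp hb2], by linarith [hτ.2]⟩
      have hup : dist (prm hT a b σ) (prm hT b c (τ - dab)) ≤ τ - σ := by
        have t1 : dist (prm hT a b σ) b = dab - σ := by
          have := prm_dist hT a b ⟨hσ.1, hb1⟩ ⟨h0ab, le_refl _⟩
          rw [prm_last] at this
          rw [this, abs_of_nonpos (by linarith), neg_sub]
        have t2 : dist b (prm hT b c (τ - dab)) = τ - dab := prm_dist_left hT b c hτm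
        calc dist (prm hT a b σ) (prm hT b c (τ - dab)) ≤
            dist (prm hT a b σ) b + dist b (prm hT b c (τ - dab)) := dist_triangle _ _ _
          _ = τ - σ := by rw [t1, t2]; ring
      have hlow : τ - σ ≤ dist (prm hT a b σ) (prm hT b c (τ - dab)) := by
        have t3 : dist (prm hT b c (τ - dab)) c = dbc - (τ - dab) := by
          have := prm_dist hT b c hτm ⟨h0bc, le_refl _⟩
          rw [prm_last] at this
          rw [this, abs_of_nonpos (by linarith [hτ.2]), neg_sub]
        have t4 : dist a (prm hT a b σ) = σ := prm_dist_left hT a b ⟨hσ.1, hb1⟩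
        have t5 : dac ≤ dist a (prm hT b c (τ - dab)) + dist (prm hT b c (τ - dab)) c :=
          dist_triangle a _ c
        have t6 : dist a (prm hT b c (τ - dab)) ≤
            dist a (prm hT a b σ) + dist (prm hT a b σ) (prm hT b c (τ - dab)) :=
          dist_triangle _ _ _
        rw [t3] at t5; rw [t4] at t6
        linarith
      linarith
    · linarith [not_le.mp hb1]
    · rw [if_neg hb1, if_neg hb2]
      have hσm : σ - dab ∈ Icc 0 dbc := ⟨by linarith [not_le.mp hb1], by linarith [hσ.2]⟩
      have hτm : τ - dab ∈ Icc 0 dbc := ⟨by linarith [not_le.mp hb1], by linarith [hτ.2]⟩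
      rw [prm_dist hT b c hσm hτm, abs_of_nonpos (by linarith), neg_sub]; ring
  refine ⟨?_, ?_, ?_⟩
  · show (if (0:ℝ) ≤ dab then prm hT a b 0 else prm hT b c (0 - dab)) = a
    rw [if_pos h0ab, prm_zero]
  · show (if dist a c ≤ dab then prm hT a b (dist a c)
      else prm hT b c (dist a c - dab)) = c
    by_cases hc : dbc = 0
    · have hbc : b = c := by
        rw [h2] at hc; exact eq_of_dist_eq_zero hc
      have hde : dac = dab := by rw [hsum, hc, add_zero]
      rw [← h3, hde, if_pos (le_refl _), prm_last, hbc]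
    · have hlt : dab < dac := by
        have : 0 < dbc := lt_of_le_of_ne h0bc (Ne.symm hc)
        rw [hsum]; linarith
      rw [← h3, if_neg (not_le.mpr hlt), hsum, add_sub_cancel_left, prm_last]
  · intro σ hσ τ hτ
    show dist (if σ ≤ dab then prm hT a b σ else prm hT b c (σ - dab))
      (if τ ≤ dab then prm hT a b τ else prm hT b c (τ - dab)) = |σ - τ|
    rw [← h3] at hσ hτ
    rcases le_total σ τ with hle | hle
    · rw [key σ τ hσ hτ hle, abs_of_nonpos (by linarith), neg_sub]
    · rw [dist_comm, key τ σ hτ hσ hle, abs_of_nonneg (by linarith)]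

theorem btw_prm (hT : IsRTree T) {a b c : T} (h : Btw a b c) {t : ℝ}
    (ht : t ∈ Icc 0 (dist a b)) : prm hT a c t = prm hT a b t := by
  have h2 := param_unique hT (prm_isom hT a c) (concat_param hT h) t
    ⟨ht.1, ht.2.trans h.le⟩
  rw [h2, if_pos ht.2]

theorem btw_prm_pt (hT : IsRTree T) {a b c : T} (h : Btw a b c) :
    prm hT a c (dist a b) = b := by
  rw [btw_prm hT h ⟨dist_nonneg, le_refl _⟩, prm_last]

theorem median (hT : IsRTree T) (x y z : T) :
    ∃ m, Btw x m y ∧ Btw x m z ∧ Btw y m z := by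
  obtain ⟨t₀, h0, hta, htb, hagree, hquant, hgp⟩ := Ylemma hT x y z
  refine ⟨prm hT x y t₀, ?_, ?_, ?_⟩
  · have h1 : dist x (prm hT x y t₀) = t₀ := prm_dist_left hT x y ⟨h0, hta⟩
    have h2 : dist (prm hT x y t₀) y = dist x y - t₀ := by
      have := prm_dist hT x y ⟨h0, hta⟩ ⟨dist_nonneg, le_refl _⟩
      rw [prm_last] at this
      rw [this, abs_of_nonpos (by linarith), neg_sub]
    unfold Btw; rw [h1, h2]; ring
  · have heq : prm hT x y t₀ = prm hT x z t₀ := hagree t₀ h0 (le_refl _)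
    have h1 : dist x (prm hT x z t₀) = t₀ := prm_dist_left hT x z ⟨h0, htb⟩
    have h2 : dist (prm hT x z t₀) z = dist x z - t₀ := by
      have := prm_dist hT x z ⟨h0, htb⟩ ⟨dist_nonneg, le_refl _⟩
      rw [prm_last] at this
      rw [this, abs_of_nonpos (by linarith), neg_sub]
    unfold Btw; rw [heq, h1, h2]; ring
  · have heq : prm hT x y t₀ = prm hT x z t₀ := hagree t₀ h0 (le_refl _)
    have h2 : dist y (prm hT x y t₀) = dist x y - t₀ := by
      have := prm_dist hT x y ⟨h0, hta⟩ ⟨dist_nonneg, le_refl _⟩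
      rw [prm_last] at this
      rw [dist_comm, this, abs_of_nonpos (by linarith), neg_sub]
    have h3 : dist (prm hT x z t₀) z = dist x z - t₀ := by
      have := prm_dist hT x z ⟨h0, htb⟩ ⟨dist_nonneg, le_refl _⟩
      rw [prm_last] at this
      rw [this, abs_of_nonpos (by linarith), neg_sub]
    unfold Btw
    rw [hgp, h2, heq, h3]

theorem btw_chain (hT : IsRTree T) {a b c e : T} (h1 : Btw a b c) (h2 : Btw b c e)
    (hbc : 0 < dist b c) : dist a e = dist a b + dist b c + dist c e := by
  obtain ⟨t₀, h0, hta, hte, hagree, hquant, hgp⟩ := Ylemma hT c a e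
  have ht00 : t₀ = 0 := by
    by_contra hne
    have hpos : 0 < t₀ := lt_of_le_of_ne h0 (Ne.symm hne)
    set r := min t₀ (dist b c) with hr
    have hr0 : 0 < r := lt_min hpos hbc
    have hrt : r ≤ t₀ := min_le_left _ _
    have hrbc : r ≤ dist b c := min_le_right _ _
    have hcb : Btw c b a := h1.symm
    have hrcb : r ∈ Icc 0 (dist c b) := ⟨le_of_lt hr0, by rwa [dist_comm c b]⟩
    have e1 : prm hT c a r = prm hT c b r := btw_prm hT hcb hrcb
    have e2 : prm hT c a r = prm hT c e r := hagree r (le_of_lt hr0) hrt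
    have d1 : dist b (prm hT c b r) = dist c b - r := by
      have := prm_dist hT c b hrcb ⟨dist_nonneg, le_refl _⟩
      rw [prm_last] at this
      rw [dist_comm, this, abs_of_nonpos (by linarith [hrcb.2]), neg_sub]
    have hre : r ∈ Icc 0 (dist c e) := ⟨le_of_lt hr0, hrt.trans hte⟩
    have d2 : dist (prm hT c e r) e = dist c e - r := by
      have := prm_dist hT c e hre ⟨dist_nonneg, le_refl _⟩
      rw [prm_last] at this
      rw [this, abs_of_nonpos (by linarith [hre.2]), neg_sub]
    rw [← e1] at d1
    rw [← e2] at d2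
    have d3 : dist b e ≤ dist b (prm hT c a r) + dist (prm hT c a r) e := dist_triangle _ _ _
    rw [d1, d2] at d3
    have hbe : dist b e = dist b c + dist c e := h2
    rw [hbe, dist_comm c b] at d3
    linarith
  rw [ht00] at hgp
  have hca : dist c a = dist a b + dist b c := by rw [dist_comm, h1]
  rw [hgp, hca]; ring

theorem pow_apply_succ (c : T ≃ᵢ T) (n : ℕ) (m : T) : (c ^ (n+1)) m = (c ^ n) (c m) := by
  rw [pow_succ]; rfl

theorem chain_iter (hT : IsRTree T) {c : T ≃ᵢ T} {m : T} {l : ℝ} (hl : 0 < l)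
    (h1 : dist m (c m) = l) (h2 : dist m (c (c m)) = 2*l) :
    ∀ n : ℕ, dist m ((c ^ n) m) = n * l := by
  have key : ∀ n : ℕ, dist m ((c ^ n) m) = n * l ∧ dist m ((c ^ (n+1)) m) = (n+1) * l := by
    intro n
    induction n with
    | zero => refine ⟨by simp, ?_⟩
              rw [pow_one]; simpa using h1
    | succ n ih =>
      refine ⟨by push_cast; push_cast at ih; exact ih.2, ?_⟩
      have e1 : (c ^ (n+1)) m = (c ^ n) (c m) := pow_apply_succ c n m
      have e2 : (c ^ (n+1+1)) m = (c ^ n) (c (c m)) := by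
        rw [pow_apply_succ c (n+1) m, pow_apply_succ c n (c m)]
      have d1 : dist ((c ^ n) m) ((c ^ (n+1)) m) = l := by
        rw [e1, (c ^ n).dist_eq, h1]
      have d2 : dist ((c ^ n) m) ((c ^ (n+1+1)) m) = 2*l := by
        rw [e2, (c ^ n).dist_eq, h2]
      have d3 : dist ((c ^ (n+1)) m) ((c ^ (n+1+1)) m) = l := by
        rw [e1, e2, (c ^ n).dist_eq, c.dist_eq]; exact h1
      have hbtw1 : Btw m ((c ^ n) m) ((c ^ (n+1)) m) := by
        unfold Btw; rw [ih.1, ih.2, d1]; push_cast; ring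
      have hbtw2 : Btw ((c ^ n) m) ((c ^ (n+1)) m) ((c ^ (n+1+1)) m) := by
        unfold Btw; rw [d1, d2, d3]; ring
      have hch := btw_chain hT hbtw1 hbtw2 (by rw [d1]; exact hl)
      rw [hch, ih.1, d1, d3]
      push_cast; ring
  exact fun n => (key n).1

theorem pow_displacement (c : T ≃ᵢ T) (y : T) : ∀ n : ℕ,
    dist y ((c ^ n) y) ≤ n * dist y (c y) := by
  intro n
  induction n with
  | zero => simp
  | succ n ih =>
    have e1 : (c ^ (n+1)) y = (c ^ n) (c y) := pow_apply_succ c n y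
    have h3 : dist ((c ^ n) y) ((c ^ (n+1)) y) = dist y (c y) := by
      rw [e1, (c ^ n).dist_eq]
    have h4 := dist_triangle y ((c ^ n) y) ((c ^ (n+1)) y)
    rw [h3] at h4
    push_cast
    linarith

theorem elliptic (hT : IsRTree T) (g : T ≃ᵢ T)
    (hg : (⨅ x : T, dist x (g x)) = 0) : ∃ x : T, g x = x := by
  by_contra hno
  push_neg at hno
  haveI : Nonempty T := hT.1
  -- it suffices to find a uniform positive lower bound for displacement
  suffices hsuff : ∃ l : ℝ, 0 < l ∧ ∀ y : T, l ≤ dist y (g y) by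
    obtain ⟨l, hl, hbd⟩ := hsuff
    have : l ≤ ⨅ x : T, dist x (g x) := le_ciInf hbd
    rw [hg] at this
    linarith
  set x₀ := Classical.arbitrary T with hx₀
  have hd0 : 0 < dist x₀ (g x₀) := dist_pos.mpr (fun h => hno x₀ h.symm)
  set d := dist x₀ (g x₀) with hd
  have hd1 : dist (g x₀) x₀ = d := by rw [dist_comm]
  have hd2 : dist (g x₀) (g (g x₀)) = d := by rw [g.dist_eq]
  obtain ⟨k, hk0, hka, hkb, hagree, hquant, hgp⟩ := Ylemma hT (g x₀) x₀ (g (g x₀))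
  rw [hd1] at hka
  rw [hd2] at hkb
  set m := prm hT (g x₀) x₀ (d/2) with hm
  have hmmem : d/2 ∈ Icc 0 (dist (g x₀) x₀) := ⟨by linarith, by rw [hd1]; linarith⟩
  have hgm : g m = prm hT (g x₀) (g (g x₀)) (d/2) := by
    rw [hm, ← prm_map hT g (g x₀) x₀ hmmem, prm_rev hT (g x₀) (g (g x₀))
      (by rw [hd2]; exact ⟨by linarith, by linarith⟩)]
    rw [hd2, show d - d/2 = d/2 by ring]
  -- case k ≥ d/2 : midpoint is fixed
  rcases le_or_gt (d/2) k with hk | hk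
  · exfalso
    apply hno m
    rw [hgm, hm, hagree (d/2) (by linarith) hk]
  -- case k < d/2 : g is hyperbolic
  set l := d - 2*k with hl
  have hlpos : 0 < l := by rw [hl]; linarith
  have hdm : dist m (g m) = l := by
    rw [hm, hgm, hquant (d/2) (le_of_lt hk) (by rw [hd1]; linarith)
      (d/2) (le_of_lt hk) (by rw [hd2]; linarith), hl]
    ring
  -- alignment : dist m (g (g m)) = 2 l
  have hw : prm hT (g x₀) x₀ k = prm hT (g x₀) (g (g x₀)) k :=
    hagree k hk0 (le_refl _)
  set w := prm hT (g x₀) x₀ k with hwdef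
  set w' := prm hT (g x₀) (g (g x₀)) (d - k) with hw'def
  have hkmem : k ∈ Icc 0 (dist (g x₀) x₀) := ⟨hk0, by rw [hd1]; linarith⟩
  have hkmem2 : k ∈ Icc 0 (dist (g x₀) (g (g x₀))) := ⟨hk0, by rw [hd2]; linarith⟩
  have hdkmem2 : d - k ∈ Icc 0 (dist (g x₀) (g (g x₀))) :=
    ⟨by linarith, by rw [hd2]; linarith⟩
  have hgw : g w = w' := by
    rw [hwdef, hw'def, ← prm_map hT g (g x₀) x₀ hkmem,
      prm_rev hT (g x₀) (g (g x₀)) (by rw [hd2]; exact ⟨hk0, by linarith⟩), hd2]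
  -- second Y data at base g (g x₀)
  obtain ⟨k₂, hk₂0, hk₂a, hk₂b, hagree₂, hquant₂, hgp₂⟩ :=
    Ylemma hT (g (g x₀)) (g x₀) (g (g (g x₀)))
  have hdist2a : dist (g (g x₀)) (g x₀) = d := by rw [g.dist_eq, dist_comm]
  have hdist2b : dist (g (g x₀)) (g (g (g x₀))) = d := by rw [g.dist_eq, g.dist_eq]
  have hgp' : dist x₀ (g (g x₀)) = (d - k) + (d - k) := by
    rw [hgp, hd1, hd2]
  have hgp₂' : dist (g x₀) (g (g (g x₀))) = (d - k₂) + (d - k₂) := by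
    rw [hgp₂, hdist2a, hdist2b]
  have hk₂k : k₂ = k := by
    have : dist (g x₀) (g (g (g x₀))) = dist x₀ (g (g x₀)) := by rw [g.dist_eq]
    rw [hgp', hgp₂'] at this
    linarith
  rw [hdist2a] at hk₂a
  rw [hdist2b] at hk₂b
  rw [hk₂k] at hagree₂ hquant₂
  -- express w and g² m on the second Y
  have hwf3 : w = prm hT (g (g x₀)) (g x₀) (d - k) := by
    rw [prm_rev hT (g x₀) (g (g x₀)) (by rw [hd2]; exact ⟨by linarith, by linarith⟩),
      hd2, show d - (d - k) = k from by ring]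
    exact hw
  have hw'f3 : w' = prm hT (g (g x₀)) (g x₀) k := by
    rw [prm_rev hT (g x₀) (g (g x₀)) (by rw [hd2]; exact ⟨hk0, by linarith⟩), hd2]
  have hggm : g (g m) = prm hT (g (g x₀)) (g (g (g x₀))) (d/2) := by
    rw [hgm, ← prm_map hT g (g x₀) (g (g x₀)) (by rw [hd2]; exact ⟨by linarith, by linarith⟩)]
  -- distances along the chain m -- w -- w' -- g²m
  have dmw : dist m w = d/2 - k := by
    rw [hm, hwdef, prm_dist hT (g x₀) x₀ hmmem hkmem, abs_of_nonneg (by linarith)]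
  have dww' : dist w w' = l := by
    rw [hw, hw'def, prm_dist hT (g x₀) (g (g x₀)) hkmem2 hdkmem2, hl,
      abs_of_nonpos (by linarith), neg_sub]
    ring
  have hk_eq : prm hT (g x₀) x₀ k = prm hT (g x₀) (g (g x₀)) k := hagree k hk0 (le_refl _)
  have dw'ggm : dist w' (g (g m)) = d/2 - k := by
    rw [← hgw, g.dist_eq, hwdef, hk_eq, hgm,
      prm_dist hT (g x₀) (g (g x₀)) hkmem2 (by rw [hd2]; exact ⟨by linarith, by linarith⟩),
      abs_of_nonpos (by linarith), neg_sub]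
  have dmw' : dist m w' = (d/2 - k) + l := by
    rw [hm, hw'def, hquant (d/2) (le_of_lt hk) (by rw [hd1]; linarith)
      (d - k) (by linarith) (by rw [hd2]; linarith), hl]
    ring
  have dwggm : dist w (g (g m)) = l + (d/2 - k) := by
    rw [hwf3, hggm, hquant₂ (d - k) (by linarith) (by rw [hdist2a]; linarith)
      (d/2) (le_of_lt hk) (by rw [hdist2b]; linarith), hl]
    ring
  have hbtw1 : Btw m w w' := by unfold Btw; rw [dmw, dww', dmw']
  have hbtw2 : Btw w w' (g (g m)) := by unfold Btw; rw [dww', dw'ggm, dwggm]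
  have hchain := btw_chain hT hbtw1 hbtw2 (by rw [dww']; exact hlpos)
  have hdm2 : dist m (g (g m)) = 2*l := by
    rw [hchain, dmw, dww', dw'ggm, hl]; ring
  -- iterate
  have hiter : ∀ n : ℕ, dist m ((g ^ n) m) = n * l := chain_iter hT hlpos hdm hdm2
  refine ⟨l, hlpos, ?_⟩
  intro y
  by_contra hlt
  push_neg at hlt
  obtain ⟨n, hn⟩ := exists_nat_gt (2 * dist m y / (l - dist y (g y)))
  have h1 : dist y ((g ^ n) y) ≤ n * dist y (g y) := pow_displacement g y n
  have h2 : dist ((g ^ n) m) ((g ^ n) y) = dist m y := (g ^ n).dist_eq m y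
  have h5 := dist_triangle4 m y ((g ^ n) y) ((g ^ n) m)
  rw [hiter n, dist_comm ((g ^ n) y) ((g ^ n) m), h2] at h5
  have hden : 0 < l - dist y (g y) := by linarith
  have hn' : 2 * dist m y < n * (l - dist y (g y)) := (div_lt_iff₀ hden).mp hn
  have hexp : (n:ℝ) * (l - dist y (g y)) = n*l - n*dist y (g y) := by ring
  linarith

theorem fix_btw (hT : IsRTree T) {g : T ≃ᵢ T} {u v w : T} (hu : g u = u) (hv : g v = v)
    (hw : Btw u w v) : g w = w := by
  have h1 : prm hT u v (dist u w) = w := btw_prm_pt hT hw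
  have hmem : dist u w ∈ Icc 0 (dist u v) := ⟨dist_nonneg, hw.le⟩
  calc g w = g (prm hT u v (dist u w)) := by rw [h1]
    _ = prm hT (g u) (g v) (dist u w) := (prm_map hT g u v hmem).symm
    _ = w := by rw [hu, hv, h1]

/-- Points fixed by `g` on an initial part of a geodesic from a fixed point. -/
theorem fix_initial (hT : IsRTree T) (g : T ≃ᵢ T) {x y : T} (hx : g x = x)
    {t : ℝ} (ht : t ∈ Icc 0 (dist x y)) (hft : g (prm hT x y t) = prm hT x y t)
    {s : ℝ} (hs : s ∈ Icc 0 t) : g (prm hT x y s) = prm hT x y s := by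
  have h1 : prm hT x (prm hT x y t) s = prm hT x y s := prm_sub hT x y ht hs
  have hd : dist x (prm hT x y t) = t := prm_dist_left hT x y ht
  have hmem : s ∈ Icc 0 (dist x (prm hT x y t)) := by rw [hd]; exact hs
  rw [← h1, ← prm_map hT g x (prm hT x y t) hmem, hx, hft]

theorem serre (hT : IsRTree T) (g h : T ≃ᵢ T) (hg : ∃ p, g p = p) (hh : ∃ q, h q = q)
    (hgh : ∃ z, g (h z) = z) : ∃ w, g w = w ∧ h w = w := by
  obtain ⟨p, hp⟩ := hg
  obtain ⟨q, hq⟩ := hh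
  obtain ⟨z, hz⟩ := hgh
  by_contra hno
  push_neg at hno
  set D := dist p q with hD
  set f := prm hT p q with hf
  have hD0 : 0 ≤ D := dist_nonneg
  set Kg : Set ℝ := {t | t ∈ Icc 0 D ∧ g (f t) = f t} with hKg
  set Kh : Set ℝ := {t | t ∈ Icc 0 D ∧ h (f t) = f t} with hKh
  have hKg0 : (0:ℝ) ∈ Kg := ⟨⟨le_refl _, hD0⟩, by rw [hf, prm_zero, hp]⟩
  have hKhD : D ∈ Kh := ⟨⟨hD0, le_refl _⟩, by rw [hf, prm_last, hq]⟩
  have hKgne : Kg.Nonempty := ⟨0, hKg0⟩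
  have hKhne : Kh.Nonempty := ⟨D, hKhD⟩
  have hKgbdd : BddAbove Kg := ⟨D, fun t htK => htK.1.2⟩
  have hKhbdd : BddBelow Kh := ⟨0, fun t htK => htK.1.1⟩
  set α := sSup Kg with hα
  set β := sInf Kh with hβ
  have hα0 : 0 ≤ α := le_csSup hKgbdd hKg0
  have hαD : α ≤ D := csSup_le hKgne (fun t htK => htK.1.2)
  have hβ0 : 0 ≤ β := le_csInf hKhne (fun t htK => htK.1.1)
  have hβD : β ≤ D := csInf_le hKhbdd hKhD
  have hαmem : α ∈ Icc 0 D := ⟨hα0, hαD⟩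
  have hβmem : β ∈ Icc 0 D := ⟨hβ0, hβD⟩
  -- α is in Kg
  have hαK : g (f α) = f α := by
    by_contra hne
    have hpos : 0 < dist (g (f α)) (f α) := dist_pos.mpr hne
    obtain ⟨t, htK, htlt⟩ := exists_lt_of_lt_csSup hKgne
      (show α - dist (g (f α)) (f α) / 4 < α by linarith)
    have htle : t ≤ α := le_csSup hKgbdd htK
    have e1 : dist (f α) (f t) = |α - t| := prm_dist hT p q hαmem htK.1
    have habs : |α - t| = α - t := abs_of_nonneg (by linarith)
    have tri := dist_triangle (g (f α)) (g (f t)) (f α)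
    rw [g.dist_eq, htK.2] at tri
    rw [dist_comm (f t) (f α)] at tri
    rw [e1, habs] at tri
    linarith
  -- β is in Kh
  have hβK : h (f β) = f β := by
    by_contra hne
    have hpos : 0 < dist (h (f β)) (f β) := dist_pos.mpr hne
    obtain ⟨t, htK, htlt⟩ := exists_lt_of_csInf_lt hKhne
      (show β < β + dist (h (f β)) (f β) / 4 by linarith)
    have htle : β ≤ t := csInf_le hKhbdd htK
    have e1 : dist (f β) (f t) = |β - t| := prm_dist hT p q hβmem htK.1
    have habs : |β - t| = t - β := by rw [abs_of_nonpos (by linarith), neg_sub]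
    have tri := dist_triangle (h (f β)) (h (f t)) (f β)
    rw [h.dist_eq, htK.2] at tri
    rw [dist_comm (f t) (f β)] at tri
    rw [e1, habs] at tri
    linarith
  -- Kg downward closed, Kh upward closed
  have hKgdown : ∀ t ∈ Kg, ∀ s ∈ Icc (0:ℝ) t, s ∈ Kg := by
    intro t htK s hs
    exact ⟨⟨hs.1, hs.2.trans htK.1.2⟩, fix_initial hT g hp htK.1 htK.2 hs⟩
  have hKhup : ∀ t ∈ Kh, ∀ s ∈ Icc t D, s ∈ Kh := by
    intro t htK s hs
    have hrev : ∀ r ∈ Icc (0:ℝ) D, f r = prm hT q p (D - r) := by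
      intro r hr
      rw [prm_rev hT p q (by rw [hD] at *; exact ⟨by linarith [hr.2], by linarith [hr.1]⟩)]
      rw [hf]; congr 1; rw [hD]; ring_nf
    have hsmem : s ∈ Icc 0 D := ⟨(htK.1.1).trans hs.1, hs.2⟩
    have htmem' : D - t ∈ Icc 0 (dist q p) := by
      rw [dist_comm]; exact ⟨by linarith [htK.1.2], by linarith [htK.1.1]⟩
    have hft' : h (prm hT q p (D - t)) = prm hT q p (D - t) := by
      rw [← hrev t htK.1]; exact htK.2
    have hkey := fix_initial hT h hq htmem' hft'
      (s := D - s) ⟨by linarith [hs.2], by linarith [hs.1]⟩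
    rw [← hrev s hsmem] at hkey
    exact ⟨hsmem, hkey⟩
  -- α < β
  have hαβ : α < β := by
    by_contra hle
    push_neg at hle
    have hβKg : β ∈ Kg := hKgdown α ⟨hαmem, hαK⟩ β ⟨hβ0, hle⟩
    exact hno (f β) hβKg.2 hβK
  set Δ := β - α with hΔ
  have hΔ0 : 0 < Δ := by rw [hΔ]; linarith
  set a' := f α with ha'
  set b' := f β with hb'
  have hab : dist a' b' = Δ := by
    rw [ha', hb', hf, prm_dist hT p q hαmem hβmem, abs_of_nonpos (by linarith), neg_sub]
  have hga : g a' = a' := hαK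
  have hhb : h b' = b' := hβK
  -- prm a' b' r = f (α + r)
  have hmid : ∀ r ∈ Icc (0:ℝ) Δ, prm hT a' b' r = f (α + r) := by
    intro r hr
    rw [ha', hb', hf]
    exact prm_mid hT p q hα0 (le_of_lt hαβ) hβD hr
  have hdab' : dist a' b' = Δ := hab
  -- prm b' a' r = f (β - r)
  have hmid' : ∀ r ∈ Icc (0:ℝ) Δ, prm hT b' a' r = f (β - r) := by
    intro r hr
    have h1 : prm hT b' a' r = prm hT a' b' (dist a' b' - r) :=
      prm_rev hT a' b' (by rw [hab]; exact hr)
    rw [h1, hab, hmid (Δ - r) ⟨by linarith [hr.2], by linarith [hr.1]⟩]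
    congr 1; rw [hΔ]; ring
  -- (S1) : dist b' (g b') = 2Δ and a' between
  have hdgb : dist a' (g b') = Δ := by rw [← hga, g.dist_eq, hab]
  have hS1 : dist b' (g b') = 2*Δ := by
    obtain ⟨t₀, ht₀0, ht₀a, ht₀b, hagr, hqnt, hgp⟩ := Ylemma hT a' b' (g b')
    have ht₀Δ : t₀ ≤ Δ := by rwa [hab] at ht₀a
    have e1 : prm hT a' b' t₀ = prm hT a' (g b') t₀ := hagr t₀ ht₀0 (le_refl _)
    have e2 : g (prm hT a' b' t₀) = prm hT a' (g b') t₀ := by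
      rw [← prm_map hT g a' b' ⟨ht₀0, ht₀a⟩, hga]
    have hwfix : g (prm hT a' b' t₀) = prm hT a' b' t₀ := by rw [e2, ← e1]
    have hmidt : prm hT a' b' t₀ = f (α + t₀) := hmid t₀ ⟨ht₀0, ht₀Δ⟩
    have hKmem : α + t₀ ∈ Kg := by
      refine ⟨⟨by linarith, by linarith⟩, ?_⟩
      rw [← hmidt]; exact hwfix
    have : α + t₀ ≤ α := le_csSup hKgbdd hKmem
    have ht₀z : t₀ = 0 := le_antisymm (by linarith) ht₀0
    rw [hgp, ht₀z, hab, hdgb]; ring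
  have hbtw012 : Btw b' a' (g b') := by
    unfold Btw; rw [hS1, dist_comm b' a', hab, hdgb]; ring
  -- (S2) : dist a' (h a') = 2Δ and b' between
  have hdha : dist b' (h a') = Δ := by rw [← hhb, h.dist_eq, dist_comm, hab]
  have hS2 : dist a' (h a') = 2*Δ := by
    obtain ⟨t₀, ht₀0, ht₀a, ht₀b, hagr, hqnt, hgp⟩ := Ylemma hT b' a' (h a')
    have hba : dist b' a' = Δ := by rw [dist_comm, hab]
    have ht₀Δ : t₀ ≤ Δ := by rwa [hba] at ht₀a
    have e1 : prm hT b' a' t₀ = prm hT b' (h a') t₀ := hagr t₀ ht₀0 (le_refl _)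
    have e2 : h (prm hT b' a' t₀) = prm hT b' (h a') t₀ := by
      rw [← prm_map hT h b' a' ⟨ht₀0, ht₀a⟩, hhb]
    have hwfix : h (prm hT b' a' t₀) = prm hT b' a' t₀ := by rw [e2, ← e1]
    have hmidt : prm hT b' a' t₀ = f (β - t₀) := hmid' t₀ ⟨ht₀0, ht₀Δ⟩
    have hKmem : β - t₀ ∈ Kh := by
      refine ⟨⟨by linarith, by linarith⟩, ?_⟩
      rw [← hmidt]; exact hwfix
    have : β ≤ β - t₀ := csInf_le hKhbdd hKmem
    have ht₀z : t₀ = 0 := le_antisymm (by linarith) ht₀0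
    rw [hgp, ht₀z, hba, hdha]; ring
  -- chain of five points
  have d23 : dist (g b') (g (h a')) = Δ := by rw [g.dist_eq, hdha]
  have d34 : dist (g (h a')) (g (h (g b'))) = Δ := by rw [g.dist_eq, h.dist_eq, hdgb]
  have hbtw123 : Btw a' (g b') (g (h a')) := by
    unfold Btw
    rw [show dist a' (g (h a')) = dist a' (h a') by rw [← g.dist_eq a' (h a'), hga], hS2,
      hdgb, d23]
    ring
  have hbtw234 : Btw (g b') (g (h a')) (g (h (g b'))) := by
    unfold Btw
    rw [show dist (g b') (g (h (g b'))) = dist b' (g b') by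
        rw [g.dist_eq, ← h.dist_eq b' (g b'), hhb], hS1, d23, d34]
    ring
  have hchain1 := btw_chain hT hbtw012 hbtw123 (by rw [hdgb]; exact hΔ0)
  rw [dist_comm b' a', hab, hdgb, d23] at hchain1
  have hbtw023 : Btw b' (g b') (g (h a')) := by
    unfold Btw; rw [hchain1, hS1, d23]; ring
  have hchain2 := btw_chain hT hbtw023 hbtw234 (by rw [d23]; exact hΔ0)
  rw [hS1, d23, d34] at hchain2
  -- iterate gh
  set c : T ≃ᵢ T := g * h with hc
  have hcb : c b' = g b' := by show g (h b') = g b'; rw [hhb]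
  have hc1 : dist b' (c b') = 2*Δ := by rw [hcb]; exact hS1
  have hc2 : dist b' (c (c b')) = 2*(2*Δ) := by
    rw [hcb]
    show dist b' (g (h (g b'))) = 2*(2*Δ)
    rw [hchain2]; ring
  have hiter := chain_iter hT (show (0:ℝ) < 2*Δ by linarith) hc1 hc2
  have hcz : c z = z := hz
  have hczn : ∀ n : ℕ, (c ^ n) z = z := by
    intro n
    induction n with
    | zero => simp
    | succ n ih => rw [pow_apply_succ, hcz, ih]
  obtain ⟨n, hn⟩ := exists_nat_gt (dist b' z / Δ)
  have h1 : dist b' ((c ^ n) b') ≤ dist b' z + dist z ((c ^ n) b') := dist_triangle _ _ _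
  have h2 : dist z ((c ^ n) b') = dist z b' := by
    calc dist z ((c ^ n) b') = dist ((c ^ n) z) ((c ^ n) b') := by rw [hczn n]
      _ = dist z b' := (c ^ n).dist_eq z b'
  rw [hiter n, h2, dist_comm z b'] at h1
  have hn' : dist b' z < n * Δ := (div_lt_iff₀ hΔ0).mp hn
  nlinarith

theorem helly (hT : IsRTree T) {ι : Type*} (F : Finset ι) (A : ι → Set T)
    (hcl : ∀ i ∈ F, ∀ u ∈ A i, ∀ v ∈ A i, ∀ w, Btw u w v → w ∈ A i)
    (hpair : ∀ i ∈ F, ∀ j ∈ F, (A i ∩ A j).Nonempty) :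
    ∃ x, ∀ i ∈ F, x ∈ A i := by
  classical
  induction F using Finset.induction_on generalizing A with
  | empty =>
    haveI : Nonempty T := hT.1
    exact ⟨Classical.arbitrary T, by simp⟩
  | @insert a F' ha IH =>
    rcases F'.eq_empty_or_nonempty with hF' | ⟨i₀, hi₀⟩
    · obtain ⟨x, hx, _⟩ := hpair a (Finset.mem_insert_self a F') a (Finset.mem_insert_self a F')
      refine ⟨x, ?_⟩
      intro i hi
      rw [hF'] at hi
      simp only [Finset.mem_insert, Finset.notMem_empty, or_false] at hi
      rwa [hi]
    · have hstep : ∃ x, ∀ i ∈ F', x ∈ A i ∩ A a := by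
        refine IH (fun i => A i ∩ A a) ?_ ?_
        · intro i hi u hu v hv w hw
          exact ⟨hcl i (Finset.mem_insert_of_mem hi) u hu.1 v hv.1 w hw,
            hcl a (Finset.mem_insert_self a F') u hu.2 v hv.2 w hw⟩
        · intro i hi j hj
          obtain ⟨u, hu⟩ := hpair i (Finset.mem_insert_of_mem hi) j (Finset.mem_insert_of_mem hj)
          obtain ⟨v, hv⟩ := hpair j (Finset.mem_insert_of_mem hj) a (Finset.mem_insert_self a F')
          obtain ⟨w, hw⟩ := hpair i (Finset.mem_insert_of_mem hi) a (Finset.mem_insert_self a F')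
          obtain ⟨m, hm1, hm2, hm3⟩ := median hT u v w
          have hmj : m ∈ A j := hcl j (Finset.mem_insert_of_mem hj) u hu.2 v hv.1 m hm1
          have hmi : m ∈ A i := hcl i (Finset.mem_insert_of_mem hi) u hu.1 w hw.1 m hm2
          have hma : m ∈ A a := hcl a (Finset.mem_insert_self a F') v hv.2 w hw.2 m hm3
          exact ⟨m, ⟨hmi, hma⟩, ⟨hmj, hma⟩⟩
      obtain ⟨x, hx⟩ := hstep
      refine ⟨x, ?_⟩
      intro i hi
      rcases Finset.mem_insert.mp hi with rfl | hi'
      · exact (hx i₀ hi₀).2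
      · exact (hx i hi').1

end RTreeAux

/-- If a group `Γ` generated by a finite set `S` acts by isometries
on an `ℝ`-tree in such a way that every element of `B_S = S ∪ {s s' : s ≠ s' ∈ S}`
has translation length `0`, then the action has a global fixed point. -/
theorem rtree_global_fixed_point_of_elliptic_generators {T : Type*} [MetricSpace T]
    (hT : IsRTree T) {Γ : Type*} [Group Γ] (S : Finset Γ)
    (hgen : Subgroup.closure (S : Set Γ) = ⊤)
    (ρ : Γ →* (T ≃ᵢ T))
    (hell : ∀ γ : Γ, (γ ∈ S ∨ ∃ s ∈ S, ∃ s' ∈ S, s ≠ s' ∧ γ = s * s') →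
      translationLength (ρ γ) = 0) :
    ∃ x : T, ∀ γ : Γ, ρ γ x = x := by
  classical
  have hell' : ∀ γ : Γ, (γ ∈ S ∨ ∃ s ∈ S, ∃ s' ∈ S, s ≠ s' ∧ γ = s * s') →
      ∃ x : T, ρ γ x = x := fun γ hγ => RTreeAux.elliptic hT (ρ γ) (hell γ hγ)
  set A : Γ → Set T := fun s => {x | ρ s x = x} with hA
  have hcl : ∀ s ∈ S, ∀ u ∈ A s, ∀ v ∈ A s, ∀ w, RTreeAux.Btw u w v → w ∈ A s := by
    intro s _ u hu v hv w hw
    exact RTreeAux.fix_btw hT hu hv hw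
  have hpair : ∀ s ∈ S, ∀ s' ∈ S, (A s ∩ A s').Nonempty := by
    intro s hs s' hs'
    by_cases hss : s = s'
    · subst hss
      obtain ⟨x, hx⟩ := hell' s (Or.inl hs)
      exact ⟨x, hx, hx⟩
    · have h1 : ∃ x, ρ s x = x := hell' s (Or.inl hs)
      have h2 : ∃ x, ρ s' x = x := hell' s' (Or.inl hs')
      have h3 : ∃ z, ρ s (ρ s' z) = z := by
        obtain ⟨z, hz⟩ := hell' (s * s') (Or.inr ⟨s, hs, s', hs', hss, rfl⟩)
        refine ⟨z, ?_⟩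
        rw [map_mul] at hz
        exact hz
      obtain ⟨w, hw1, hw2⟩ := RTreeAux.serre hT (ρ s) (ρ s') h1 h2 h3
      exact ⟨w, hw1, hw2⟩
  obtain ⟨x, hx⟩ := RTreeAux.helly hT S A hcl hpair
  refine ⟨x, ?_⟩
  have hmem : ∀ γ ∈ Subgroup.closure (S : Set Γ), ρ γ x = x := by
    intro γ hγ
    induction hγ using Subgroup.closure_induction with
    | mem s hs => exact hx s hs
    | one => rw [map_one]; rfl
    | mul a b _ _ pa pb => rw [map_mul]; show (ρ a) ((ρ b) x) = x; rw [pb, pa]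
    | inv a _ pa =>
      have : (ρ a⁻¹) ((ρ a) x) = (ρ a⁻¹) x := by rw [pa]
      calc (ρ a⁻¹) x = (ρ a⁻¹) ((ρ a) x) := by rw [pa]
        _ = ((ρ a⁻¹) * (ρ a)) x := rfl
        _ = x := by rw [← map_mul, inv_mul_cancel, map_one]; rfl
  intro γ
  exact hmem γ (by rw [hgen]; exact Subgroup.mem_top γ)
end
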